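/- arXiv:2104.10895 — 4 statements merged into one kernel-verified Lean document; each statement's English description precedes it below -/
import Mathlib

section
/- Let A : ℝ^J → X be a bounded linear operator and define the deterministic EKI iteration: A_0 := A, X̂_0 := x0, and for k ≥ 0, with B_k := R^{-1/2} L A_k, set X̂_{k+1} := X̂_k + A_k (B_k* B_k + I_J)^{-1} B_k* R^{-1/2} (ŷ − L X̂_k) and A_{k+1} := A_k (B_k* B_k + I_J)^{-1/2}. Then, with B := R^{-1/2} L A, for every k ≥ 1 the iterate admits the closed-form representation X̂_k = x0 + A (B* B + k^{-1} I_J)^{-1} B* R^{-1/2} (ŷ − L x0). -/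
/-!
Write `S = B* B`. By induction `A_k = A P_k` with `P_k` invertible and `P_k P_k* = (k S + I)⁻¹`:
the update keeps this form because `P (P* S P + I)⁻¹ P* = (S + (P P*)⁻¹)⁻¹`. Consequently the
gain `A_k (B_k* B_k + I)⁻¹ B_k*` equals `A ((k + 1) S + I)⁻¹ B*`, the misfit after `k` steps is
mapped by `B*` to `(k S + I)⁻¹ B* z`, and the mean increments telescope by the resolvent identity
`(k + 1) ((k + 1) S + I)⁻¹ - k (k S + I)⁻¹ = ((k + 1) S + I)⁻¹ (k S + I)⁻¹`.
Finally `k (k S + I)⁻¹ = (S + k⁻¹ I)⁻¹` for `k ≥ 1`.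
-/

open MeasureTheory
open scoped InnerProductSpace ENNReal NNReal

section Defs

variable {E X Y : Type*}
  [NormedAddCommGroup E] [InnerProductSpace ℝ E] [CompleteSpace E]
  [NormedAddCommGroup X] [InnerProductSpace ℝ X] [CompleteSpace X]
  [NormedAddCommGroup Y] [InnerProductSpace ℝ Y] [CompleteSpace Y]

/-- The direct EKI estimate `X^d_α(A) = x₀ + A (B*B + α I)⁻¹ B* z`, where `B := R^{-1/2} L A`
(passed via the bounded factorization `RinvL = R^{-1/2} L`) and `z = R^{-1/2}(ŷ - L x₀)`.
Note that `A* L* R^{-1} = B* R^{-1/2}`, so this coincides with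
`x₀ + A (A* L* R^{-1} L A + α I)⁻¹ A* L* R^{-1} (ŷ - L x₀)`.
For `A = C0^{1/2}` this is the Tikhonov-regularized solution `x̂_α`. -/
noncomputable def dirSol (A : E →L[ℝ] X) (RinvL : X →L[ℝ] Y) (x0 : X) (z : Y) (α : ℝ) : X :=
  x0 + A ((Ring.inverse ((ContinuousLinearMap.adjoint (RinvL ∘L A)) ∘L (RinvL ∘L A) + α • 1))
    ((ContinuousLinearMap.adjoint (RinvL ∘L A)) z))

/-- The metric projection onto the closed ball of radius `r` around `x0`. -/
noncomputable def projBall (x0 : X) (r : ℝ) (x : X) : X :=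
  if ‖x - x0‖ ≤ r then x else x0 + (r / ‖x - x0‖) • (x - x0)

/-- The discrepancy-principle stopping index `min {k ≥ 1 : ‖ŷ - L (sol k)‖_R ≤ c}`,
where `‖v‖_R = ‖w‖` for the unique `w` with `R^{1/2} w = v`. -/
noncomputable def stopIdx (sqrtR : Y →L[ℝ] Y) (L : X →L[ℝ] Y) (sol : ℕ → X) (yhat : Y)
    (c : ℝ) : ℕ :=
  sInf {k : ℕ | 1 ≤ k ∧ ∃ w : Y, sqrtR w = yhat - L (sol k) ∧ ‖w‖ ≤ c}

/-- `α_k = b^k α₀`. -/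
noncomputable def alphaSeq (b α0 : ℝ) (k : ℕ) : ℝ := b ^ k * α0

/-- `J_k = ⌈b^{-k/γ} J₀⌉`. -/
noncomputable def jSeq (b γ : ℝ) (J0 : ℕ) (k : ℕ) : ℕ := ⌈b ^ (-(k : ℝ) / γ) * (J0 : ℝ)⌉₊

end Defs

open ContinuousLinearMap
open scoped Ring

section RingInverse

theorem Ring.mul_inverse_mul_add_one_mul {R : Type*} [Ring R] {P Q M S : R} (hP : IsUnit P)
    (hM : IsUnit M) (hPQ : P * Q = M⁻¹ʳ) : P * (Q * S * P + 1)⁻¹ʳ * Q = (S + M)⁻¹ʳ := by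
  have hQ : Q = P⁻¹ʳ * M⁻¹ʳ := by rw [← hPQ, Ring.inverse_mul_cancel_left _ _ hP]
  have hQunit : IsUnit Q := hQ ▸ hP.ringInverse.mul hM.ringInverse
  have hQMP : Q * M * P = 1 := by
    rw [hQ, Ring.inverse_mul_cancel_right _ _ hM, Ring.inverse_mul_cancel _ hP]
  have hfactor : Q * S * P + 1 = Q * (S + M) * P := by
    rw [← hQMP, mul_add, add_mul]
  rw [hfactor, Ring.inverse_mul (.inr hP), Ring.inverse_mul (.inl hQunit),
    Ring.mul_inverse_cancel_left _ _ hP, Ring.inverse_mul_cancel_right _ _ hQunit]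

variable {𝕜 A : Type*} [Field 𝕜] [Ring A] [Algebra 𝕜 A] {s : A} {c d : 𝕜}

theorem one_sub_mul_smul_inverse_smul_add_one (h : IsUnit (c • s + 1)) :
    1 - s * (c • (c • s + 1)⁻¹ʳ) = (c • s + 1)⁻¹ʳ := by
  rw [sub_eq_iff_eq_add, mul_smul_comm, ← smul_mul_assoc]
  nth_rw 1 [← Ring.mul_inverse_cancel _ h]
  rw [add_mul, one_mul, add_comm]

theorem smul_inverse_smul_add_one_sub (hc : IsUnit (c • s + 1)) (hd : IsUnit (d • s + 1)) :
    d • (d • s + 1)⁻¹ʳ - c • (c • s + 1)⁻¹ʳ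
      = (d - c) • ((d • s + 1)⁻¹ʳ * (c • s + 1)⁻¹ʳ) := by
  have hkey : d • (c • s + 1) - c • (d • s + 1) = (d - c) • 1 := by module
  calc d • (d • s + 1)⁻¹ʳ - c • (c • s + 1)⁻¹ʳ
      = (d • s + 1)⁻¹ʳ * (d • (c • s + 1) - c • (d • s + 1)) * (c • s + 1)⁻¹ʳ := by
        rw [mul_sub, sub_mul, mul_smul_comm, smul_mul_assoc, mul_smul_comm, smul_mul_assoc,
          Ring.mul_inverse_cancel_right _ _ hc, Ring.inverse_mul_cancel _ hd, one_mul]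
    _ = (d - c) • ((d • s + 1)⁻¹ʳ * (c • s + 1)⁻¹ʳ) := by
        rw [hkey, mul_smul_comm, mul_one, smul_mul_assoc]

theorem inverse_add_inv_smul_one (hc : c ≠ 0) (h : IsUnit (c • s + 1)) :
    (s + c⁻¹ • 1)⁻¹ʳ = c • (c • s + 1)⁻¹ʳ := by
  have hscale : s + c⁻¹ • 1 = c⁻¹ • (c • s + 1) := by
    rw [smul_add, smul_smul, inv_mul_cancel₀ hc, one_smul]
  have hunit : IsUnit (s + c⁻¹ • 1) := by
    rw [hscale, ← smul_one_mul, ← Algebra.algebraMap_eq_smul_one]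
    exact ((isUnit_iff_ne_zero.mpr (inv_ne_zero hc)).map (algebraMap 𝕜 A)).mul h
  symm
  rw [← one_mul (s + c⁻¹ • 1)⁻¹ʳ, Ring.eq_mul_inverse_iff_mul_eq _ _ _ hunit, hscale,
    smul_mul_smul, mul_inv_cancel₀ hc, one_smul, Ring.inverse_mul_cancel _ h]

end RingInverse

section Gram

variable {𝕜 E F : Type*} [RCLike 𝕜]
  [NormedAddCommGroup E] [InnerProductSpace 𝕜 E] [CompleteSpace E]
  [NormedAddCommGroup F] [InnerProductSpace 𝕜 F] [CompleteSpace F]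

theorem ContinuousLinearMap.IsPositive.isUnit_add_one {T : E →L[𝕜] E} (hT : T.IsPositive) :
    IsUnit (T + 1) :=
  isUnit_of_forall_le_norm_inner_map _ one_pos fun x => calc
    ‖x‖ ^ 2 * (1 : NNReal) = RCLike.re ⟪x, x⟫_𝕜 := by simp
    _ ≤ RCLike.re ⟪(T + 1) x, x⟫_𝕜 := by
        simpa [inner_add_left] using hT.re_inner_nonneg_left x
    _ ≤ ‖⟪(T + 1) x, x⟫_𝕜‖ := RCLike.re_le_norm _

noncomputable def gram (B : E →L[𝕜] F) : E →L[𝕜] E := adjoint B ∘L B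

theorem gram_comp (B : E →L[𝕜] F) (P : E →L[𝕜] E) : gram (B ∘L P) = adjoint P * gram B * P := by
  rw [gram, adjoint_comp]
  rfl

end Gram

section Real

variable {E F : Type*}
  [NormedAddCommGroup E] [InnerProductSpace ℝ E] [CompleteSpace E]
  [NormedAddCommGroup F] [InnerProductSpace ℝ F] [CompleteSpace F]

theorem isUnit_smul_gram_add_one (B : E →L[ℝ] F) {c : ℝ} (hc : 0 ≤ c) :
    IsUnit (c • gram B + 1) :=
  ((isPositive_adjoint_comp_self B).smul_of_nonneg hc).isUnit_add_one

theorem mul_inverse_gram_comp_add_one_mul_adjoint {B : E →L[ℝ] F} {P : E →L[ℝ] E} {c : ℝ}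
    (hc : 0 ≤ c) (hP : IsUnit P) (hPP : P * adjoint P = (c • gram B + 1)⁻¹ʳ) :
    P * (gram (B ∘L P) + 1)⁻¹ʳ * adjoint P = ((c + 1) • gram B + 1)⁻¹ʳ := by
  rw [gram_comp, show (c + 1) • gram B + 1 = gram B + (c • gram B + 1) by module]
  exact Ring.mul_inverse_mul_add_one_mul hP (isUnit_smul_gram_add_one B hc) hPP

end Real

section EKI

variable {F X Y : Type*}
  [NormedAddCommGroup F] [InnerProductSpace ℝ F] [CompleteSpace F]
  [NormedAddCommGroup X] [NormedSpace ℝ X]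
  [NormedAddCommGroup Y] [InnerProductSpace ℝ Y] [CompleteSpace Y]
  {G : X →L[ℝ] Y} {A : F →L[ℝ] X} {Aseq : ℕ → F →L[ℝ] X} {Q : ℕ → F →L[ℝ] F}

theorem eki_exists_factor (hA0 : Aseq 0 = A) (hQ : ∀ k, IsSelfAdjoint (Q k))
    (hQsq : ∀ k, Q k ∘L Q k = (gram (G ∘L Aseq k) + 1)⁻¹ʳ)
    (hArec : ∀ k, Aseq (k + 1) = Aseq k ∘L Q k) (k : ℕ) :
    ∃ P : F →L[ℝ] F, IsUnit P ∧ Aseq k = A ∘L P ∧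
      P * adjoint P = ((k : ℝ) • gram (G ∘L A) + 1)⁻¹ʳ := by
  induction k with
  | zero => exact ⟨1, isUnit_one, by rw [hA0]; rfl, by rw [← star_eq_adjoint]; simp⟩
  | succ k ih =>
    obtain ⟨P, hP, hAk, hPP⟩ := ih
    have hQunit : IsUnit (Q k) := by
      refine ((Commute.refl (Q k)).isUnit_mul_iff.mp ?_).1
      rw [mul_def, hQsq k]
      simpa using (isUnit_smul_gram_add_one (G ∘L Aseq k) zero_le_one).ringInverse
    refine ⟨P * Q k, hP.mul hQunit, by rw [hArec, hAk]; rfl, ?_⟩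
    have hGAk : G ∘L Aseq k = (G ∘L A) ∘L P := by rw [hAk]; rfl
    calc P * Q k * adjoint (P * Q k) = P * (Q k ∘L Q k) * adjoint P := by
          rw [mul_def P, adjoint_comp, (hQ k).adjoint_eq]
          rfl
      _ = _ := by
          rw [hQsq, hGAk, Nat.cast_succ]
          exact mul_inverse_gram_comp_add_one_mul_adjoint k.cast_nonneg hP hPP

theorem eki_gain_eq (hA0 : Aseq 0 = A) (hQ : ∀ k, IsSelfAdjoint (Q k))
    (hQsq : ∀ k, Q k ∘L Q k = (gram (G ∘L Aseq k) + 1)⁻¹ʳ)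
    (hArec : ∀ k, Aseq (k + 1) = Aseq k ∘L Q k) (k : ℕ) :
    Aseq k ∘L (gram (G ∘L Aseq k) + 1)⁻¹ʳ ∘L adjoint (G ∘L Aseq k)
      = A ∘L (((k : ℝ) + 1) • gram (G ∘L A) + 1)⁻¹ʳ ∘L adjoint (G ∘L A) := by
  obtain ⟨P, hP, hAk, hPP⟩ := eki_exists_factor hA0 hQ hQsq hArec k
  rw [← mul_inverse_gram_comp_add_one_mul_adjoint k.cast_nonneg hP hPP, hAk,
    show G ∘L (A ∘L P) = (G ∘L A) ∘L P from rfl, adjoint_comp]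
  rfl

theorem eki_mean_eq {Xh : ℕ → X} {x0 : X} {z0 : Y} (hX0 : Xh 0 = x0)
    (hXrec : ∀ k, Xh (k + 1) = Xh k + Aseq k
      ((gram (G ∘L Aseq k) + 1)⁻¹ʳ (adjoint (G ∘L Aseq k) (z0 - G (Xh k)))))
    (hgain : ∀ k : ℕ, Aseq k ∘L (gram (G ∘L Aseq k) + 1)⁻¹ʳ ∘L adjoint (G ∘L Aseq k)
      = A ∘L (((k : ℝ) + 1) • gram (G ∘L A) + 1)⁻¹ʳ ∘L adjoint (G ∘L A)) (k : ℕ) :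
    Xh k = x0 + A (((k : ℝ) • ((k : ℝ) • gram (G ∘L A) + 1)⁻¹ʳ)
      (adjoint (G ∘L A) (z0 - G x0))) := by
  set B := G ∘L A
  set v := adjoint B (z0 - G x0)
  induction k with
  | zero => simp [hX0]
  | succ k ih =>
    have hunit (c : ℝ) (hc : 0 ≤ c) := isUnit_smul_gram_add_one B hc
    set g : F →L[ℝ] F := (k : ℝ) • ((k : ℝ) • gram B + 1)⁻¹ʳ
    have hres : adjoint B (z0 - G (Xh k)) = ((k : ℝ) • gram B + 1)⁻¹ʳ v := calc
      adjoint B (z0 - G (Xh k)) = (1 - gram B * g) v := by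
        rw [ih, map_add, ← sub_sub, map_sub]
        rfl
      _ = ((k : ℝ) • gram B + 1)⁻¹ʳ v := by
        rw [one_sub_mul_smul_inverse_smul_add_one (hunit k k.cast_nonneg)]
    have hstep : Xh (k + 1)
        = Xh k + A ((((k : ℝ) + 1) • gram B + 1)⁻¹ʳ (((k : ℝ) • gram B + 1)⁻¹ʳ v)) := by
      rw [hXrec, ← hres]
      exact congrArg (Xh k + ·) (DFunLike.congr_fun (hgain k) _)
    have hsum := smul_inverse_smul_add_one_sub (hunit k k.cast_nonneg)
      (hunit (k + 1) (by positivity))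
    rw [add_sub_cancel_left, one_smul, sub_eq_iff_eq_add'] at hsum
    rw [hstep, ih, add_assoc, ← map_add, Nat.cast_succ, hsum, add_apply]
    rfl

end EKI

theorem stmt1_general
    {X Y : Type*}
    [NormedAddCommGroup X] [InnerProductSpace ℝ X]
    [NormedAddCommGroup Y] [InnerProductSpace ℝ Y] [CompleteSpace Y]
    (L : X →L[ℝ] Y)
    -- `RinvL = R^{-1/2} L` is bounded with `‖R^{-1/2} L‖ ≤ c_RL`
    (RinvL : X →L[ℝ] Y)
    (J : ℕ) (A : EuclideanSpace ℝ (Fin J) →L[ℝ] X)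
    (x0 : X)
    -- the data `ŷ ∈ ran R^{1/2}`, with `z0 = R^{-1/2} ŷ`
    (z0 : Y)
    -- the deterministic EKI iteration in square-root form:
    (Xh : ℕ → X) (Aseq : ℕ → (EuclideanSpace ℝ (Fin J) →L[ℝ] X))
    (hX0 : Xh 0 = x0) (hA0 : Aseq 0 = A)
    -- `X̂_{k+1} = X̂_k + A_k (B_k* B_k + I)⁻¹ B_k* R^{-1/2}(ŷ - L X̂_k)` with `B_k = R^{-1/2} L A_k`
    (hXrec : ∀ k : ℕ, Xh (k + 1) = Xh k + (Aseq k)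
      ((Ring.inverse ((ContinuousLinearMap.adjoint (RinvL ∘L Aseq k)) ∘L (RinvL ∘L Aseq k) + 1))
        ((ContinuousLinearMap.adjoint (RinvL ∘L Aseq k)) (z0 - RinvL (Xh k)))))
    -- `A_{k+1} = A_k (B_k* B_k + I)^{-1/2}`, where `Q k` is the positive square root
    -- of `(B_k* B_k + I)⁻¹`
    (Q : ℕ → (EuclideanSpace ℝ (Fin J) →L[ℝ] EuclideanSpace ℝ (Fin J)))
    (hQpos : ∀ k, (Q k).IsPositive)
    (hQsq : ∀ k, (Q k) ∘L (Q k) =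
      Ring.inverse ((ContinuousLinearMap.adjoint (RinvL ∘L Aseq k)) ∘L (RinvL ∘L Aseq k) + 1))
    (hArec : ∀ k, Aseq (k + 1) = Aseq k ∘L Q k) :
    -- then `X̂_k = x₀ + A (B* B + k⁻¹ I)⁻¹ B* R^{-1/2}(ŷ - L x₀)` with `B = R^{-1/2} L A`
    ∀ k : ℕ, 1 ≤ k →
      Xh k = x0 + A
        ((Ring.inverse ((ContinuousLinearMap.adjoint (RinvL ∘L A)) ∘L (RinvL ∘L A)
            + (k : ℝ)⁻¹ • 1))
          ((ContinuousLinearMap.adjoint (RinvL ∘L A)) (z0 - RinvL x0))) := by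
  intro k hk
  have hk0 : (k : ℝ) ≠ 0 := by exact_mod_cast (by omega : k ≠ 0)
  have hgain := eki_gain_eq hA0 (fun k => (hQpos k).isSelfAdjoint) hQsq hArec
  rw [eki_mean_eq hX0 hXrec hgain k,
    ← inverse_add_inv_smul_one hk0 (isUnit_smul_gram_add_one _ k.cast_nonneg)]
  rfl

/-- STATEMENT 1: closed-form representation of the deterministic EKI iteration. -/
theorem stmt1
    {X Y : Type*}
    [NormedAddCommGroup X] [InnerProductSpace ℝ X] [CompleteSpace X]
    [TopologicalSpace.SeparableSpace X]
    [NormedAddCommGroup Y] [InnerProductSpace ℝ Y] [CompleteSpace Y]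
    [TopologicalSpace.SeparableSpace Y]
    (L : X →L[ℝ] Y)
    (C0 : X →L[ℝ] X) (hC0pos : C0.IsPositive) (hC0inj : Function.Injective C0)
    (hC0cpt : IsCompactOperator (⇑C0))
    (R : Y →L[ℝ] Y) (hRpos : R.IsPositive) (hRinj : Function.Injective R)
    (sqrtR : Y →L[ℝ] Y) (hsqrtRpos : sqrtR.IsPositive) (hsqrtR : sqrtR ∘L sqrtR = R)
    -- `RinvL = R^{-1/2} L` is bounded with `‖R^{-1/2} L‖ ≤ c_RL`
    (RinvL : X →L[ℝ] Y) (hRinvL : sqrtR ∘L RinvL = L)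
    (cRL : ℝ) (hcRL : ‖RinvL‖ ≤ cRL)
    (J : ℕ) (A : EuclideanSpace ℝ (Fin J) →L[ℝ] X)
    (x0 : X)
    -- the data `ŷ ∈ ran R^{1/2}`, with `z0 = R^{-1/2} ŷ`
    (yhat : Y) (z0 : Y) (hz0 : sqrtR z0 = yhat)
    -- the deterministic EKI iteration in square-root form:
    (Xh : ℕ → X) (Aseq : ℕ → (EuclideanSpace ℝ (Fin J) →L[ℝ] X))
    (hX0 : Xh 0 = x0) (hA0 : Aseq 0 = A)
    -- `X̂_{k+1} = X̂_k + A_k (B_k* B_k + I)⁻¹ B_k* R^{-1/2}(ŷ - L X̂_k)` with `B_k = R^{-1/2} L A_k`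
    (hXrec : ∀ k : ℕ, Xh (k + 1) = Xh k + (Aseq k)
      ((Ring.inverse ((ContinuousLinearMap.adjoint (RinvL ∘L Aseq k)) ∘L (RinvL ∘L Aseq k) + 1))
        ((ContinuousLinearMap.adjoint (RinvL ∘L Aseq k)) (z0 - RinvL (Xh k)))))
    -- `A_{k+1} = A_k (B_k* B_k + I)^{-1/2}`, where `Q k` is the positive square root
    -- of `(B_k* B_k + I)⁻¹`
    (Q : ℕ → (EuclideanSpace ℝ (Fin J) →L[ℝ] EuclideanSpace ℝ (Fin J)))
    (hQpos : ∀ k, (Q k).IsPositive)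
    (hQsq : ∀ k, (Q k) ∘L (Q k) =
      Ring.inverse ((ContinuousLinearMap.adjoint (RinvL ∘L Aseq k)) ∘L (RinvL ∘L Aseq k) + 1))
    (hArec : ∀ k, Aseq (k + 1) = Aseq k ∘L Q k) :
    -- then `X̂_k = x₀ + A (B* B + k⁻¹ I)⁻¹ B* R^{-1/2}(ŷ - L x₀)` with `B = R^{-1/2} L A`
    ∀ k : ℕ, 1 ≤ k →
      Xh k = x0 + A
        ((Ring.inverse ((ContinuousLinearMap.adjoint (RinvL ∘L A)) ∘L (RinvL ∘L A)
            + (k : ℝ)⁻¹ • 1))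
          ((ContinuousLinearMap.adjoint (RinvL ∘L A)) (z0 - RinvL x0))) :=
  stmt1_general L RinvL J A x0 z0 Xh Aseq hX0 hA0 hXrec Q hQpos hQsq hArec
end

section
/- (Schmidt–Eckart–Young–Mirsky) Let C0 : X → X be a positive, self-adjoint, compact bounded linear operator on a real separable Hilbert space X, and let (λ_n) denote its eigenvalues in decreasing order, repeated according to multiplicity. Then for every J ∈ ℕ: (i) every bounded linear operator P : X → X with rank(P) ≤ J satisfies ‖P − C0‖ ≥ λ_{J+1}, and (ii) the rank-J spectral truncation of C0 (the operator ∑_{n=1}^J λ_n ⟨e_n, ·⟩ e_n for an orthonormal family of eigenvectors e_n of C0 with C0 e_n = λ_n e_n) attains this bound: its operator-norm distance to C0 equals λ_{J+1}. Hence λ_{J+1} = inf{ ‖P − C0‖ : P ∈ BL(X;X), rank(P) ≤ J }. -/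
/-!
A rank-`J` operator `P` kills some unit vector `u` in the `(J+1)`-dimensional span of
`e 0, …, e J`, on which `‖C0 u‖ ≥ λ_{J+1} ‖u‖`; hence `‖(P - C0) u‖ = ‖C0 u‖ ≥ λ_{J+1}`.
Conversely `C0 x = ∑ λ_n ⟨e_n, x⟩ e_n`, so `C0 x` minus its spectral truncation is the tail
`∑_{n ≥ J} λ_n ⟨e_n, x⟩ e_n`, of norm at most `λ_{J+1} ‖x‖` by Bessel's inequality.
-/

open scoped InnerProductSpace

section Orthonormal

variable {𝕜 X ι : Type*} [RCLike 𝕜] [NormedAddCommGroup X] [InnerProductSpace 𝕜 X] {e : ι → X}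

theorem Orthonormal.norm_sum_smul_sq (he : Orthonormal 𝕜 e) (c : ι → 𝕜) (s : Finset ι) :
    ‖∑ i ∈ s, c i • e i‖ ^ 2 = ∑ i ∈ s, ‖c i‖ ^ 2 := by
  simpa using he.orthogonalFamily.norm_sum c s

theorem Orthonormal.hasSum_norm_sq (he : Orthonormal 𝕜 e) {c : ι → 𝕜} {y : X}
    (h : HasSum (fun i => c i • e i) y) : HasSum (fun i => ‖c i‖ ^ 2) (‖y‖ ^ 2) := by
  simpa [HasSum, Function.comp_def, he.norm_sum_smul_sq] using
    ((continuous_norm.pow 2).tendsto y).comp h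

theorem Orthonormal.inner_eq_of_hasSum (he : Orthonormal 𝕜 e) {c : ι → 𝕜} {y : X}
    (h : HasSum (fun i => c i • e i) y) (j : ι) : ⟪e j, y⟫_𝕜 = c j := by
  classical
  refine (h.mapL (innerSL 𝕜 (e j))).unique ?_
  convert hasSum_ite_eq j (c j) using 2 with i
  by_cases hij : i = j
  · simp [hij, he.1 j]
  · simp [hij, he.2 (Ne.symm hij)]

theorem Orthonormal.norm_le_of_hasSum (he : Orthonormal 𝕜 e) {c : ι → 𝕜} {x y : X} {M : ℝ}
    (hM : 0 ≤ M) (h : HasSum (fun i => c i • e i) y) (hc : ∀ i, ‖c i‖ ≤ M * ‖⟪e i, x⟫_𝕜‖) :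
    ‖y‖ ≤ M * ‖x‖ := by
  have hsq : ‖y‖ ^ 2 ≤ (M * ‖x‖) ^ 2 :=
    calc ‖y‖ ^ 2 = ∑' i, ‖c i‖ ^ 2 := (he.hasSum_norm_sq h).tsum_eq.symm
      _ ≤ ∑' i, M ^ 2 * ‖⟪e i, x⟫_𝕜‖ ^ 2 :=
        (he.hasSum_norm_sq h).summable.tsum_le_tsum
          (fun i => by rw [← mul_pow]; gcongr; exact hc i)
          ((he.inner_products_summable x).mul_left (M ^ 2))
      _ = M ^ 2 * ∑' i, ‖⟪e i, x⟫_𝕜‖ ^ 2 := tsum_mul_left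
      _ ≤ (M * ‖x‖) ^ 2 := by rw [mul_pow]; gcongr; exact he.tsum_inner_products_le x
  exact (pow_le_pow_iff_left₀ (norm_nonneg _) (by positivity) two_ne_zero).mp hsq

theorem Orthonormal.exists_hasSum_inner_smul [CompleteSpace X] (he : Orthonormal 𝕜 e) (x : X) :
    ∃ p, HasSum (fun i => ⟪e i, x⟫_𝕜 • e i) p ∧ ∀ j, ⟪e j, x - p⟫_𝕜 = 0 := by
  have hsum : Summable fun i => ⟪e i, x⟫_𝕜 • e i := by
    simpa using (he.orthogonalFamily.summable_iff_norm_sq_summable _).mpr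
      (he.inner_products_summable x)
  obtain ⟨p, hp⟩ := hsum
  exact ⟨p, hp, fun j => by rw [inner_sub_right, he.inner_eq_of_hasSum hp, sub_self]⟩

end Orthonormal

theorem LinearMap.exists_mem_ne_zero_apply_eq_zero_of_rank_lt {K V W : Type*} [DivisionRing K]
    [AddCommGroup V] [Module K V] [AddCommGroup W] [Module K W] (f : V →ₗ[K] W)
    {S : Submodule K V} [FiniteDimensional K S] (h : f.rank < Module.finrank K S) :
    ∃ u ∈ S, u ≠ 0 ∧ f u = 0 := by
  by_contra! hne
  have hinj : Function.Injective (f ∘ₗ S.subtype) := by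
    rw [← LinearMap.ker_eq_bot, Submodule.eq_bot_iff]
    intro u hu
    by_contra hu0
    exact hne u u.2 (by simpa using hu0) hu
  have : (Module.finrank K S : Cardinal) ≤ f.rank := by
    rw [← LinearMap.finrank_range_of_inj hinj, Module.finrank_eq_rank]
    exact LinearMap.rank_comp_le_left _ _
  exact this.not_gt h

theorem LinearMap.rank_le_card_of_forall_mem_span {K V W : Type*} [DivisionRing K]
    [AddCommGroup V] [Module K V] [AddCommGroup W] [Module K W] (f : V →ₗ[K] W) (s : Finset W)
    (h : ∀ x, f x ∈ Submodule.span K (s : Set W)) : f.rank ≤ s.card :=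
  (Submodule.rank_mono (by rintro _ ⟨x, rfl⟩; exact h x)).trans
    (rank_span_finset_le s)

theorem ContinuousLinearMap.le_opNorm_sub_of_rank_lt {𝕜 E F : Type*} [NontriviallyNormedField 𝕜]
    [NormedAddCommGroup E] [NormedSpace 𝕜 E] [NormedAddCommGroup F] [NormedSpace 𝕜 F]
    (P A : E →L[𝕜] F) {V : Submodule 𝕜 E} [FiniteDimensional 𝕜 V]
    (hP : (P : E →ₗ[𝕜] F).rank < Module.finrank 𝕜 V) {μ : ℝ}
    (hA : ∀ u ∈ V, μ * ‖u‖ ≤ ‖A u‖) : μ ≤ ‖P - A‖ := by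
  obtain ⟨u, huV, hu0, hPu⟩ := (P : E →ₗ[𝕜] F).exists_mem_ne_zero_apply_eq_zero_of_rank_lt hP
  have hPu : P u = 0 := hPu
  refine le_of_mul_le_mul_right ?_ (norm_pos_iff.mpr hu0)
  calc μ * ‖u‖ ≤ ‖A u‖ := hA u huV
    _ = ‖(P - A) u‖ := by rw [sub_apply, hPu, zero_sub, norm_neg]
    _ ≤ ‖P - A‖ * ‖u‖ := (P - A).le_opNorm u

section Eigen

variable {X ι : Type*} [NormedAddCommGroup X] [InnerProductSpace ℝ X] {A : X →L[ℝ] X}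
  {e : ι → X} {lam : ι → ℝ}

theorem Orthonormal.hasSum_apply_of_eigenvectors [CompleteSpace X] (he : Orthonormal ℝ e)
    (heig : ∀ i, A (e i) = lam i • e i) (hdiag : ∀ x, (∀ i, ⟪e i, x⟫_ℝ = 0) → A x = 0)
    (x : X) : HasSum (fun i => (lam i * ⟪e i, x⟫_ℝ) • e i) (A x) := by
  obtain ⟨p, hp, hperp⟩ := he.exists_hasSum_inner_smul x
  have hAx : A x = A p := sub_eq_zero.mp (by simpa using hdiag (x - p) hperp)
  rw [hAx]
  convert hp.mapL A using 2 with i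
  rw [map_smul, heig i, smul_smul, mul_comm]

theorem Orthonormal.mul_norm_le_norm_apply_of_mem_span [Fintype ι] (he : Orthonormal ℝ e)
    (heig : ∀ i, A (e i) = lam i • e i) {μ : ℝ} (hμ : 0 ≤ μ) (hlam : ∀ i, μ ≤ |lam i|) {u : X}
    (hu : u ∈ Submodule.span ℝ (Set.range e)) : μ * ‖u‖ ≤ ‖A u‖ := by
  obtain ⟨c, rfl⟩ := (Submodule.mem_span_range_iff_exists_fun ℝ).mp hu
  have hAu : A (∑ i, c i • e i) = ∑ i, (lam i * c i) • e i := by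
    simp only [map_sum, map_smul, heig, smul_smul, mul_comm]
  have hsq : (μ * ‖∑ i, c i • e i‖) ^ 2 ≤ ‖A (∑ i, c i • e i)‖ ^ 2 := by
    rw [hAu, mul_pow, he.norm_sum_smul_sq, he.norm_sum_smul_sq, Finset.mul_sum]
    gcongr with i
    rw [norm_mul, mul_pow, Real.norm_eq_abs (lam i)]
    gcongr
    exact hlam i
  exact (pow_le_pow_iff_left₀ (by positivity) (norm_nonneg _) two_ne_zero).mp hsq

theorem sum_smul_innerSL_smulRight_apply (s : Finset ι) (x : X) :
    (∑ i ∈ s, lam i • (innerSL ℝ (e i)).smulRight (e i)) x =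
      ∑ i ∈ s, (lam i * ⟪e i, x⟫_ℝ) • e i := by
  simp [smul_smul]

theorem rank_sum_smul_innerSL_smulRight_le (s : Finset ι) :
    LinearMap.rank ((∑ i ∈ s, lam i • (innerSL ℝ (e i)).smulRight (e i) : X →L[ℝ] X) :
      X →ₗ[ℝ] X) ≤ s.card := by
  classical
  refine (LinearMap.rank_le_card_of_forall_mem_span _ (s.image e) fun x => ?_).trans
    (mod_cast Finset.card_image_le)
  rw [ContinuousLinearMap.coe_coe, sum_smul_innerSL_smulRight_apply]
  exact Submodule.sum_mem _ fun i hi =>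
    Submodule.smul_mem _ _ (Submodule.subset_span (Finset.mem_coe.mpr (s.mem_image_of_mem e hi)))

end Eigen

section Truncation

variable {X : Type*} [NormedAddCommGroup X] [InnerProductSpace ℝ X] {A : X →L[ℝ] X}
  {e : ℕ → X} {lam : ℕ → ℝ}

theorem Orthonormal.norm_apply_sub_sum_range_le [CompleteSpace X] (he : Orthonormal ℝ e)
    (hanti : Antitone lam) (hnonneg : ∀ n, 0 ≤ lam n) (heig : ∀ n, A (e n) = lam n • e n)
    (hdiag : ∀ x, (∀ n, ⟪e n, x⟫_ℝ = 0) → A x = 0) (J : ℕ) (x : X) :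
    ‖A x - ∑ n ∈ Finset.range J, (lam n * ⟪e n, x⟫_ℝ) • e n‖ ≤ lam J * ‖x‖ := by
  have htail := (hasSum_nat_add_iff' J).mpr (he.hasSum_apply_of_eigenvectors heig hdiag x)
  refine (he.comp _ (add_left_injective J)).norm_le_of_hasSum (hnonneg J) htail fun n => ?_
  rw [norm_mul, Real.norm_of_nonneg (hnonneg _)]
  exact mul_le_mul_of_nonneg_right (hanti (Nat.le_add_left J n)) (norm_nonneg _)

theorem Orthonormal.le_opNorm_sub_of_rank_le (he : Orthonormal ℝ e) (hanti : Antitone lam)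
    (hnonneg : ∀ n, 0 ≤ lam n) (heig : ∀ n, A (e n) = lam n • e n) {J : ℕ} (P : X →L[ℝ] X)
    (hP : (P : X →ₗ[ℝ] X).rank ≤ J) : lam J ≤ ‖P - A‖ := by
  set v : Fin (J + 1) → X := fun i => e i
  have hv : Orthonormal ℝ v := he.comp _ Fin.val_injective
  have := FiniteDimensional.span_of_finite ℝ (Set.finite_range v)
  have hrank : Module.finrank ℝ (Submodule.span ℝ (Set.range v)) = J + 1 := by
    rw [finrank_span_eq_card hv.linearIndependent, Fintype.card_fin]
  refine P.le_opNorm_sub_of_rank_lt A (hP.trans_lt ?_) fun u hu =>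
    hv.mul_norm_le_norm_apply_of_mem_span (fun i => heig i) (hnonneg J)
      (fun i => (hanti (Nat.lt_succ_iff.mp i.isLt)).trans (le_abs_self _)) hu
  rw [hrank]
  exact_mod_cast J.lt_succ_self

end Truncation

/-- The eigenvalue sequence is encoded by an orthonormal family `e` of eigenvectors with
nonincreasing nonnegative eigenvalues `lam`, 0-indexed (`lam n = λ_{n+1}`), that diagonalizes `C0`
(`C0` vanishes on the orthogonal complement of the family). -/
theorem stmt6_general
    {X : Type*} [NormedAddCommGroup X] [InnerProductSpace ℝ X] [CompleteSpace X]
    (C0 : X →L[ℝ] X)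
    (lam : ℕ → ℝ) (e : ℕ → X)
    (he : Orthonormal ℝ e)
    (hanti : Antitone lam) (hnonneg : ∀ n, 0 ≤ lam n)
    (heig : ∀ n, C0 (e n) = lam n • e n)
    (hdiag : ∀ x : X, (∀ n, ⟪e n, x⟫_ℝ = 0) → C0 x = 0)
    (J : ℕ) :
    -- (i) every operator of rank at most `J` is at distance at least `λ_{J+1} = lam J` from `C0`
    (∀ P : X →L[ℝ] X, LinearMap.rank (P : X →ₗ[ℝ] X) ≤ (J : Cardinal) →
      lam J ≤ ‖P - C0‖) ∧
    -- (ii) the rank-`J` spectral truncation `∑_{n<J} λ_{n+1} ⟨e n, ·⟩ e n` attains this bound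
    (‖(∑ n ∈ Finset.range J, lam n • ((innerSL ℝ (e n)).smulRight (e n))) - C0‖ = lam J) ∧
    -- hence `λ_{J+1}` is the infimum of distances to rank-`≤ J` operators
    (lam J = sInf ((fun P : X →L[ℝ] X => ‖P - C0‖) ''
      {P : X →L[ℝ] X | LinearMap.rank (P : X →ₗ[ℝ] X) ≤ (J : Cardinal)})) := by
  set T : X →L[ℝ] X := ∑ n ∈ Finset.range J, lam n • (innerSL ℝ (e n)).smulRight (e n)
  have lower (P : X →L[ℝ] X) (hP : LinearMap.rank (P : X →ₗ[ℝ] X) ≤ J) : lam J ≤ ‖P - C0‖ :=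
    he.le_opNorm_sub_of_rank_le hanti hnonneg heig P hP
  have hrankT : LinearMap.rank (T : X →ₗ[ℝ] X) ≤ J :=
    Finset.card_range J ▸ rank_sum_smul_innerSL_smulRight_le (lam := lam) (e := e) (Finset.range J)
  have hT : ‖T - C0‖ = lam J := by
    refine le_antisymm (ContinuousLinearMap.opNorm_le_bound _ (hnonneg J) fun x => ?_)
      (lower T hrankT)
    rw [sub_apply, norm_sub_rev, sum_smul_innerSL_smulRight_apply]
    exact he.norm_apply_sub_sum_range_le hanti hnonneg heig hdiag J x
  refine ⟨lower, hT, (IsLeast.csInf_eq ?_).symm⟩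
  exact ⟨⟨T, hrankT, hT⟩, by rintro _ ⟨P, hP, rfl⟩; exact lower P hP⟩

/-- STATEMENT 6: the Schmidt–Eckart–Young–Mirsky theorem for a positive, self-adjoint, compact
operator `C0` on a real separable Hilbert space. The eigenvalue sequence in decreasing order
(with multiplicity) is encoded by an orthonormal family `e` of eigenvectors with nonincreasing
nonnegative eigenvalues `lam` (0-indexed: `lam n = λ_{n+1}`) that diagonalizes `C0`
(`C0` vanishes on the orthogonal complement of the family). -/
theorem stmt6
    {X : Type*} [NormedAddCommGroup X] [InnerProductSpace ℝ X] [CompleteSpace X]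
    [TopologicalSpace.SeparableSpace X]
    (C0 : X →L[ℝ] X) (hC0pos : C0.IsPositive) (hC0cpt : IsCompactOperator (⇑C0))
    (lam : ℕ → ℝ) (e : ℕ → X)
    (he : Orthonormal ℝ e)
    (hanti : Antitone lam) (hnonneg : ∀ n, 0 ≤ lam n)
    (heig : ∀ n, C0 (e n) = lam n • e n)
    (hdiag : ∀ x : X, (∀ n, ⟪e n, x⟫_ℝ = 0) → C0 x = 0)
    (J : ℕ) :
    -- (i) every operator of rank at most `J` is at distance at least `λ_{J+1} = lam J` from `C0`
    (∀ P : X →L[ℝ] X, LinearMap.rank (P : X →ₗ[ℝ] X) ≤ (J : Cardinal) →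
      lam J ≤ ‖P - C0‖) ∧
    -- (ii) the rank-`J` spectral truncation `∑_{n<J} λ_{n+1} ⟨e n, ·⟩ e n` attains this bound
    (‖(∑ n ∈ Finset.range J, lam n • ((innerSL ℝ (e n)).smulRight (e n))) - C0‖ = lam J) ∧
    -- hence `λ_{J+1}` is the infimum of distances to rank-`≤ J` operators
    (lam J = sInf ((fun P : X →L[ℝ] X => ‖P - C0‖) ''
      {P : X →L[ℝ] X | LinearMap.rank (P : X →ₗ[ℝ] X) ≤ (J : Cardinal)})) :=
  stmt6_general C0 lam e he hanti hnonneg heig hdiag J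
end

section
/- Suppose the source condition holds: x† is the (x0, C0)-minimum-norm solution of L x = y (it minimizes ‖x − x0‖_{C0} among solutions of L x = y), and there exist μ ∈ (0, 1/2], ρ > 0 and v ∈ X with ‖v‖ ≤ ρ and x† − x0 = C0^{1/2} (B*B)^μ v, where B := R^{-1/2} L C0^{1/2}. Let x_α := x0 + C0^{1/2}(B*B + α Id)^{-1} B* R^{-1/2}(y − L x0) be the Tikhonov-regularized solution with exact data y and α > 0. Then ‖x_α − x†‖_{C0} ≤ ρ^{1/(2μ+1)} · ‖L x_α − y‖_R^{2μ/(2μ+1)}. -/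
open MeasureTheory
open scoped InnerProductSpace ENNReal NNReal

section AuxLemmas

open Filter Topology ContinuousLinearMap

/-- Auxiliary interpolation (moment) inequality for an abstract family of fractional powers:
if `f` is a positive, norm-continuous semigroup on `(0,∞)`, then
`⟪f t u, u⟫ ^ s ≤ (‖u‖²)^(s-t) * ⟪f s u, u⟫ ^ t` for `0 < t ≤ s`. -/
lemma moment_aux {H : Type*} [NormedAddCommGroup H] [InnerProductSpace ℝ H] [CompleteSpace H]
    (f : ℝ → (H →L[ℝ] H))
    (hadd : ∀ s t : ℝ, 0 < s → 0 < t → f (s + t) = f s ∘L f t)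
    (hpos : ∀ t : ℝ, 0 < t → (f t).IsPositive)
    (hcont : ContinuousOn f (Set.Ioi (0:ℝ)))
    (u : H) (t s : ℝ) (ht : 0 < t) (hts : t ≤ s) :
    (⟪f t u, u⟫_ℝ) ^ s ≤ (‖u‖^2 : ℝ) ^ (s - t) * (⟪f s u, u⟫_ℝ) ^ t := by
  have hs : 0 < s := ht.trans_le hts
  by_cases hu : u = 0
  · subst hu
    simp only [inner_zero_right, Real.zero_rpow hs.ne', Real.zero_rpow ht.ne', mul_zero, le_refl]
  have hu' : 0 < ‖u‖ := norm_pos_iff.mpr hu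
  set φ : ℝ → ℝ := fun r => ⟪f r u, u⟫_ℝ with hφdef
  set N : ℝ := ‖u‖^2 with hNdef
  have hN : 0 < N := by positivity
  have hsa : ∀ a : ℝ, 0 < a → ∀ x y : H, ⟪f a x, y⟫_ℝ = ⟪x, f a y⟫_ℝ := by
    intro a ha x y
    rw [← (hpos a ha).isSelfAdjoint.adjoint_eq, ContinuousLinearMap.adjoint_inner_left,
      (hpos a ha).isSelfAdjoint.adjoint_eq]
  have hnorm : ∀ a : ℝ, 0 < a → φ (a + a) = ‖f a u‖^2 := by
    intro a ha
    show ⟪f (a+a) u, u⟫_ℝ = ‖f a u‖^2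
    rw [hadd a a ha ha, ContinuousLinearMap.comp_apply, hsa a ha,
      real_inner_self_eq_norm_sq]
  have hφnn : ∀ a : ℝ, 0 < a → 0 ≤ φ a := by
    intro a ha
    have h2 : a = a/2 + a/2 := by ring
    rw [h2, hnorm (a/2) (by positivity)]
    positivity
  have hφs0 : 0 ≤ φ s := hφnn s hs
  have hCS : ∀ a b : ℝ, 0 < a → 0 < b → φ (a + b) ^ (2:ℕ) ≤ φ (a+a) * φ (b+b) := by
    intro a b ha hb
    have h1 : φ (a + b) = ⟪f b u, f a u⟫_ℝ := by
      show ⟪f (a+b) u, u⟫_ℝ = ⟪f b u, f a u⟫_ℝ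
      rw [hadd a b ha hb, ContinuousLinearMap.comp_apply, hsa a ha]
    have h2 : |⟪f b u, f a u⟫_ℝ| ≤ ‖f b u‖ * ‖f a u‖ := abs_real_inner_le_norm _ _
    calc φ (a+b) ^ (2:ℕ) = |⟪f b u, f a u⟫_ℝ| ^ (2:ℕ) := by rw [h1, sq_abs]
      _ ≤ (‖f b u‖ * ‖f a u‖)^(2:ℕ) := pow_le_pow_left₀ (abs_nonneg _) h2 _
      _ = φ (a+a) * φ (b+b) := by rw [hnorm a ha, hnorm b hb]; ring
  have hend : ∀ a : ℝ, 0 < a → φ a ^ (2:ℕ) ≤ N * φ (a+a) := by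
    intro a ha
    have h2 : |⟪f a u, u⟫_ℝ| ≤ ‖f a u‖ * ‖u‖ := abs_real_inner_le_norm _ _
    calc φ a ^ (2:ℕ) = |⟪f a u, u⟫_ℝ| ^ (2:ℕ) := by rw [sq_abs]
      _ ≤ (‖f a u‖ * ‖u‖)^(2:ℕ) := pow_le_pow_left₀ (abs_nonneg _) h2 _
      _ = N * φ (a+a) := by rw [hnorm a ha, hNdef]; ring
  -- continuity of φ on (0, ∞)
  have hφcont : ∀ a : ℝ, 0 < a → ContinuousAt φ a := by
    intro a ha
    have h1 : Continuous fun A : H →L[ℝ] H => ⟪A u, u⟫_ℝ :=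
      continuous_inner.comp ((ContinuousLinearMap.apply ℝ H u).continuous.prodMk
        continuous_const)
    exact h1.continuousAt.comp (hcont.continuousAt (Ioi_mem_nhds ha))
  -- dispose of the degenerate case φ s = 0
  by_cases hφs : φ s = 0
  · have hfs2 : f (s/2) u = 0 := by
      have h1 : φ (s/2 + s/2) = ‖f (s/2) u‖^2 := hnorm (s/2) (by positivity)
      rw [show s/2 + s/2 = s by ring, hφs] at h1
      have := sq_eq_zero_iff.mp h1.symm
      simpa using this
    have hgt : ∀ r : ℝ, s/2 < r → φ r = 0 := by
      intro r hr
      have hr2 : 0 < r - s/2 := by linarith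
      show ⟪f r u, u⟫_ℝ = 0
      rw [show r = (r - s/2) + s/2 by ring, hadd _ _ hr2 (by positivity),
        ContinuousLinearMap.comp_apply, hfs2, map_zero, inner_zero_left]
    have hall : ∀ n : ℕ, ∀ r : ℝ, 0 < r → s/2 / 2^n < r → φ r = 0 := by
      intro n
      induction n with
      | zero => intro r _ h; exact hgt r (by simpa using h)
      | succ n ih =>
        intro r hr h
        have h2 : s/2/2^n < r + r := by
          rw [pow_succ] at h
          have : (0:ℝ) < 2^n := by positivity
          rw [div_mul_eq_div_div] at h
          linarith [h]
        have h3 : φ (r + r) = 0 := ih (r + r) (by linarith) h2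
        have h4 : φ r ^ (2:ℕ) ≤ 0 := by
          have := hend r hr
          rw [h3, mul_zero] at this
          exact this
        have h5 := hφnn r hr
        nlinarith [h4, h5]
    have hφt : φ t = 0 := by
      obtain ⟨n, hn⟩ := pow_unbounded_of_one_lt (s/2/t) (by norm_num : (1:ℝ) < 2)
      refine hall n t ht ?_
      have h2 : (0:ℝ) < 2^n := by positivity
      rw [div_lt_iff₀ h2]
      rw [div_lt_iff₀ ht] at hn
      nlinarith [hn, ht, h2]
    show φ t ^ s ≤ N ^ (s - t) * φ s ^ t
    rw [hφt, hφs, Real.zero_rpow hs.ne', Real.zero_rpow ht.ne', mul_zero]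
  have hφspos : 0 < φ s := lt_of_le_of_ne hφs0 (Ne.symm hφs)
  -- rpow helpers
  have rpm : ∀ x : ℝ, 0 ≤ x → ∀ a b c : ℝ, a * b = c → (x ^ a) ^ b = x ^ c := by
    intro x hx a b c h; rw [← Real.rpow_mul hx, h]
  have rpa : ∀ x : ℝ, 0 < x → ∀ a b c : ℝ, a + b = c → x ^ a * x ^ b = x ^ c := by
    intro x hx a b c h; rw [← Real.rpow_add hx, h]
  have pow_half : ∀ x y : ℝ, 0 ≤ x → x ^ (2:ℕ) ≤ y → x ^ s ≤ y ^ (s/2) := by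
    intro x y hx hxy
    calc x ^ s = (x ^ (2:ℕ)) ^ (s/2) := by
          rw [← Real.rpow_natCast x 2, ← Real.rpow_mul hx]
          congr 1; ring
      _ ≤ y ^ (s/2) := Real.rpow_le_rpow (by positivity) hxy (by positivity)
  set S : Set ℝ := {r : ℝ | 0 < r ∧ r ≤ s ∧ φ r ^ s ≤ N ^ (s - r) * φ s ^ r} with hSdef
  have hSs : s ∈ S := by
    refine ⟨hs, le_refl _, ?_⟩
    rw [sub_self, Real.rpow_zero, one_mul]
  have hhalf : ∀ r, r ∈ S → r/2 ∈ S := by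
    rintro r ⟨hr0, hrs, hr⟩
    refine ⟨by positivity, by linarith, ?_⟩
    have h2 : φ (r/2) ^ (2:ℕ) ≤ N * φ r := by
      have := hend (r/2) (by positivity)
      rwa [show r/2 + r/2 = r by ring] at this
    calc φ (r/2) ^ s ≤ (N * φ r) ^ (s/2) := pow_half _ _ (hφnn _ (by positivity)) h2
      _ = N^(s/2) * φ r ^ (s/2) := Real.mul_rpow hN.le (hφnn r hr0)
      _ = N^(s/2) * (φ r ^ s) ^ ((1:ℝ)/2) := by rw [rpm (φ r) (hφnn r hr0) s (1/2) (s/2) (by ring)]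
      _ ≤ N^(s/2) * (N ^ (s - r) * φ s ^ r) ^ ((1:ℝ)/2) := by
          exact mul_le_mul_of_nonneg_left
            (Real.rpow_le_rpow (Real.rpow_nonneg (hφnn r hr0) s) hr (by norm_num))
            (Real.rpow_nonneg hN.le _)
      _ = N^(s/2) * (N ^ ((s-r)/2) * φ s ^ (r/2)) := by
          rw [Real.mul_rpow (Real.rpow_nonneg hN.le _) (Real.rpow_nonneg hφs0 _),
            rpm N hN.le (s-r) (1/2) ((s-r)/2) (by ring),
            rpm (φ s) hφs0 r (1/2) (r/2) (by ring)]
      _ = N ^ (s - r/2) * φ s ^ (r/2) := by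
          rw [← mul_assoc, rpa N hN (s/2) ((s-r)/2) (s - r/2) (by ring)]
  have hmid : ∀ a b, a ∈ S → b ∈ S → (a+b)/2 ∈ S := by
    rintro a b ⟨ha0, has, ha⟩ ⟨hb0, hbs, hb⟩
    refine ⟨by positivity, by linarith, ?_⟩
    have h2 : φ ((a+b)/2) ^ (2:ℕ) ≤ φ a * φ b := by
      have := hCS (a/2) (b/2) (by positivity) (by positivity)
      rwa [show a/2 + b/2 = (a+b)/2 by ring, show a/2 + a/2 = a by ring,
        show b/2 + b/2 = b by ring] at this
    calc φ ((a+b)/2) ^ s ≤ (φ a * φ b) ^ (s/2) :=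
          pow_half _ _ (hφnn _ (by positivity)) h2
      _ = φ a ^ (s/2) * φ b ^ (s/2) := Real.mul_rpow (hφnn a ha0) (hφnn b hb0)
      _ = (φ a ^ s) ^ ((1:ℝ)/2) * (φ b ^ s) ^ ((1:ℝ)/2) := by
          rw [rpm (φ a) (hφnn a ha0) s (1/2) (s/2) (by ring),
            rpm (φ b) (hφnn b hb0) s (1/2) (s/2) (by ring)]
      _ ≤ (N ^ (s-a) * φ s ^ a) ^ ((1:ℝ)/2) * (N ^ (s-b) * φ s ^ b) ^ ((1:ℝ)/2) := by
          apply mul_le_mul (Real.rpow_le_rpow (Real.rpow_nonneg (hφnn a ha0) s) ha (by norm_num))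
            (Real.rpow_le_rpow (Real.rpow_nonneg (hφnn b hb0) s) hb (by norm_num))
            (Real.rpow_nonneg (Real.rpow_nonneg (hφnn b hb0) s) _)
            (Real.rpow_nonneg (mul_nonneg (Real.rpow_nonneg hN.le _)
              (Real.rpow_nonneg hφs0 _)) _)
      _ = (N ^ ((s-a)/2) * N ^ ((s-b)/2)) * (φ s ^ (a/2) * φ s ^ (b/2)) := by
          rw [Real.mul_rpow (Real.rpow_nonneg hN.le _) (Real.rpow_nonneg hφs0 _),
            Real.mul_rpow (Real.rpow_nonneg hN.le _) (Real.rpow_nonneg hφs0 _),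
            rpm N hN.le (s-a) (1/2) ((s-a)/2) (by ring),
            rpm N hN.le (s-b) (1/2) ((s-b)/2) (by ring),
            rpm (φ s) hφs0 a (1/2) (a/2) (by ring),
            rpm (φ s) hφs0 b (1/2) (b/2) (by ring)]
          ring
      _ = N ^ (s - (a+b)/2) * φ s ^ ((a+b)/2) := by
          rw [rpa N hN ((s-a)/2) ((s-b)/2) (s - (a+b)/2) (by ring),
            rpa (φ s) hφspos (a/2) (b/2) ((a+b)/2) (by ring)]
  -- dyadic multiples of s are in S
  have hdy : ∀ n : ℕ, ∀ k : ℕ, 1 ≤ k → k ≤ 2^n → ((k:ℝ)/2^n) * s ∈ S := by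
    intro n
    induction n with
    | zero =>
      intro k h1 h2
      have : k = 1 := le_antisymm (by simpa using h2) h1
      subst this
      simpa using hSs
    | succ n ih =>
      intro k h1 h2
      rcases Nat.even_or_odd k with ⟨j, hj⟩ | ⟨j, hj⟩
      · subst hj
        have hj1 : 1 ≤ j := by omega
        have hj2 : j ≤ 2^n := by
          have : 2^(n+1) = 2^n + 2^n := by rw [pow_succ]; ring
          omega
        have := ih j hj1 hj2
        rwa [show (((j + j : ℕ)):ℝ)/2^(n+1) * s = ((j:ℝ)/2^n) * s by push_cast [pow_succ]; ring]
      · rcases Nat.eq_zero_or_pos j with rfl | hj1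
        · -- k = 1
          simp only [Nat.mul_zero, Nat.zero_add] at hj
          subst hj
          have := hhalf _ (ih 1 le_rfl (Nat.one_le_two_pow))
          rwa [show ((1:ℕ):ℝ)/2^n * s / 2 = ((1:ℕ):ℝ)/2^(n+1) * s by push_cast [pow_succ]; ring]
            at this
        · subst hj
          have hj2 : j + 1 ≤ 2^n := by
            have : 2^(n+1) = 2^n + 2^n := by rw [pow_succ]; ring
            omega
          have ha := ih j hj1 (by omega)
          have hb := ih (j+1) (by omega) hj2
          have := hmid _ _ ha hb
          rwa [show (((j:ℝ)/2^n) * s + ((j+1:ℕ):ℝ)/2^n * s)/2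
              = (((2*j+1 : ℕ)):ℝ)/2^(n+1) * s by push_cast [pow_succ]; ring] at this
  -- now approximate t by dyadics from above
  rcases eq_or_lt_of_le hts with rfl | hts'
  · show φ t ^ t ≤ N ^ (t - t) * φ t ^ t
    rw [sub_self, Real.rpow_zero, one_mul]
  · set k : ℕ → ℕ := fun n => ⌈(t/s) * 2^n⌉₊ with hkdef
    set r : ℕ → ℝ := fun n => ((k n : ℝ)/2^n) * s with hrdef
    have hk1 : ∀ n, 1 ≤ k n := by
      intro n
      rw [hkdef]
      exact Nat.one_le_ceil_iff.mpr (by positivity)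
    have hk2 : ∀ n, k n ≤ 2^n := by
      intro n
      rw [hkdef]
      refine Nat.ceil_le.mpr ?_
      push_cast
      have h1 : t/s ≤ 1 := div_le_one_of_le₀ hts hs.le
      nlinarith [pow_pos (by norm_num : (0:ℝ) < 2) n]
    have hrS : ∀ n, r n ∈ S := fun n => hdy n (k n) (hk1 n) (hk2 n)
    have h2p : ∀ n : ℕ, (0:ℝ) < 2^n := fun n => by positivity
    have hrt : ∀ n, t ≤ r n := by
      intro n
      have h1 := Nat.le_ceil ((t/s) * 2^n)
      rw [hrdef]
      simp only
      rw [div_mul_eq_mul_div, le_div_iff₀ (h2p n)]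
      have : t/s * 2^n * s = t * 2^n := by field_simp
      nlinarith [h1, hs]
    have hub : ∀ n, r n ≤ t + s/2^n := by
      intro n
      have h1 := (Nat.ceil_lt_add_one (by positivity : (0:ℝ) ≤ (t/s) * 2^n)).le
      rw [hrdef]
      simp only
      rw [div_mul_eq_mul_div, div_le_iff₀ (h2p n)]
      have h3 : t/s * 2^n * s = t * 2^n := by field_simp
      have h4 : s/2^n * 2^n = s := div_mul_cancel₀ s (h2p n).ne'
      nlinarith [mul_le_mul_of_nonneg_right h1 hs.le, h3, h4]
    have hlim : Tendsto r atTop (nhds t) := by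
      have h0 : Tendsto (fun n : ℕ => t + s/2^n) atTop (nhds (t + 0)) := by
        apply tendsto_const_nhds.add
        have h1 : Tendsto (fun n : ℕ => s * (1/2:ℝ)^n) atTop (nhds (s * 0)) :=
          (tendsto_pow_atTop_nhds_zero_of_lt_one (by norm_num) (by norm_num)).const_mul s
        rw [mul_zero] at h1
        have h2 : (fun n : ℕ => s/2^n) = fun n : ℕ => s * (1/2:ℝ)^n := by
          funext n; rw [div_pow, one_pow, mul_one_div]
        rw [h2]; exact h1
      rw [add_zero] at h0
      exact tendsto_of_tendsto_of_tendsto_of_le_of_le tendsto_const_nhds h0 hrt hub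
    have hLHS : Tendsto (fun n => φ (r n) ^ s) atTop (nhds (φ t ^ s)) := by
      have hc : ContinuousAt (fun x : ℝ => x ^ s) (φ t) :=
        Real.continuousAt_rpow_const _ _ (Or.inr hs.le)
      exact hc.tendsto.comp ((hφcont t ht).tendsto.comp hlim)
    have hRHS : Tendsto (fun n => N ^ (s - r n) * φ s ^ (r n)) atTop
        (nhds (N ^ (s - t) * φ s ^ t)) := by
      apply Tendsto.mul
      · exact (Real.continuousAt_const_rpow hN.ne').tendsto.comp
          (tendsto_const_nhds.sub hlim)
      · exact (Real.continuousAt_const_rpow hφspos.ne').tendsto.comp hlim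
    exact le_of_tendsto_of_tendsto' hLHS hRHS (fun n => (hrS n).2.2)

/-- Auxiliary real-power arithmetic: from `(a²)^(2μ+1) ≤ c² ((b²)^(2μ))` with `c ≤ ρ` deduce
`a ≤ ρ^(1/(2μ+1)) b^(2μ/(2μ+1))`. -/
lemma fin_aux (a b c ρ μ : ℝ) (ha : 0 ≤ a) (hb : 0 ≤ b) (hc : 0 ≤ c) (hμ : 0 < μ)
    (hcρ : c ≤ ρ) (key : ((a^2 : ℝ)) ^ (2*μ+1) ≤ c^2 * ((b^2 : ℝ)) ^ (2*μ)) :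
    a ≤ ρ ^ ((1:ℝ)/(2*μ+1)) * b ^ (2*μ/(2*μ+1)) := by
  have hs : (0:ℝ) < 2*μ+1 := by linarith
  have he : (0:ℝ) < 1/(2*(2*μ+1)) := by positivity
  set e : ℝ := 1/(2*(2*μ+1)) with hedef
  have h1 : (((a^2:ℝ)) ^ (2*μ+1)) ^ e ≤ (c^2 * ((b^2:ℝ)) ^ (2*μ)) ^ e :=
    Real.rpow_le_rpow (Real.rpow_nonneg (by positivity) _) key he.le
  have hL : (((a^2:ℝ)) ^ (2*μ+1)) ^ e = a := by
    rw [← Real.rpow_natCast a 2, ← Real.rpow_mul ha, ← Real.rpow_mul ha,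
      show ((2:ℕ):ℝ) * (2*μ+1) * e = 1 by
        rw [hedef]; push_cast; field_simp,
      Real.rpow_one]
  have hR : (c^2 * ((b^2:ℝ)) ^ (2*μ)) ^ e
      = c ^ ((1:ℝ)/(2*μ+1)) * b ^ (2*μ/(2*μ+1)) := by
    rw [Real.mul_rpow (by positivity) (Real.rpow_nonneg (by positivity) _),
      ← Real.rpow_natCast c 2, ← Real.rpow_mul hc,
      ← Real.rpow_natCast b 2, ← Real.rpow_mul hb, ← Real.rpow_mul hb]
    congr 1
    · congr 1
      rw [hedef]; push_cast; field_simp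
    · congr 1
      rw [hedef]; push_cast; field_simp
  calc a = (((a^2:ℝ)) ^ (2*μ+1)) ^ e := hL.symm
    _ ≤ (c^2 * ((b^2:ℝ)) ^ (2*μ)) ^ e := h1
    _ = c ^ ((1:ℝ)/(2*μ+1)) * b ^ (2*μ/(2*μ+1)) := hR
    _ ≤ ρ ^ ((1:ℝ)/(2*μ+1)) * b ^ (2*μ/(2*μ+1)) :=
        mul_le_mul_of_nonneg_right (Real.rpow_le_rpow hc hcρ (by positivity))
          (Real.rpow_nonneg hb _)

end AuxLemmas


/-- STATEMENT 9: the convergence estimate `‖x_α - x†‖_{C0} ≤ ρ^{1/(2μ+1)} ‖L x_α - y‖_R^{2μ/(2μ+1)}`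
for Tikhonov regularization with exact data `y = L x†` under the source condition.
Here `x_α = dirSol sqrtC0 RinvL x0 (RinvL (xdag - x0)) α`, since
`R^{-1/2}(y - L x₀) = R^{-1/2} L (x† - x₀) = RinvL (xdag - x0)`. The weighted norms are
expressed via preimages under `R^{1/2}` resp. `C0^{1/2}` (unique by injectivity). -/
theorem stmt9
    {X Y : Type*}
    [NormedAddCommGroup X] [InnerProductSpace ℝ X] [CompleteSpace X]
    [TopologicalSpace.SeparableSpace X]
    [NormedAddCommGroup Y] [InnerProductSpace ℝ Y] [CompleteSpace Y]
    [TopologicalSpace.SeparableSpace Y]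
    (L : X →L[ℝ] Y)
    (C0 : X →L[ℝ] X) (hC0pos : C0.IsPositive) (hC0inj : Function.Injective C0)
    (hC0cpt : IsCompactOperator (⇑C0))
    (R : Y →L[ℝ] Y) (hRpos : R.IsPositive) (hRinj : Function.Injective R)
    -- `sqrtC0 = C0^{1/2}` and `sqrtR = R^{1/2}`
    (sqrtC0 : X →L[ℝ] X) (hsqrtC0pos : sqrtC0.IsPositive) (hsqrtC0 : sqrtC0 ∘L sqrtC0 = C0)
    (sqrtR : Y →L[ℝ] Y) (hsqrtRpos : sqrtR.IsPositive) (hsqrtR : sqrtR ∘L sqrtR = R)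
    -- `RinvL = R^{-1/2} L` is bounded with `‖R^{-1/2} L‖ ≤ c_RL`
    (RinvL : X →L[ℝ] Y) (hRinvL : sqrtR ∘L RinvL = L)
    (cRL : ℝ) (hcRL : ‖RinvL‖ ≤ cRL)
    (x0 xdag : X)
    (μ : ℝ) (hμ : 0 < μ) (hμhalf : μ ≤ 1 / 2) (ρ : ℝ) (hρ : 0 < ρ)
    -- `fpow t = (B*B)^t` for `t > 0`, where `B = R^{-1/2} L C0^{1/2} = RinvL ∘L sqrtC0`:
    -- the fractional powers are characterized as the unique positive, norm-continuous
    -- semigroup on `(0,∞)` with `fpow 1 = B*B`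
    (fpow : ℝ → (X →L[ℝ] X))
    (hfpow1 : fpow 1 = (ContinuousLinearMap.adjoint (RinvL ∘L sqrtC0)) ∘L (RinvL ∘L sqrtC0))
    (hfpowadd : ∀ s t : ℝ, 0 < s → 0 < t → fpow (s + t) = fpow s ∘L fpow t)
    (hfpowpos : ∀ t : ℝ, 0 < t → (fpow t).IsPositive)
    (hfpowcont : ContinuousOn fpow (Set.Ioi (0 : ℝ)))
    -- source condition: `x† - x₀ = C0^{1/2} (B*B)^μ v` with `‖v‖ ≤ ρ`
    (v : X) (hv : ‖v‖ ≤ ρ) (hsource : xdag - x0 = sqrtC0 (fpow μ v))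
    -- `x†` is the `(x₀, C0)`-minimum-norm solution of `L x = y` (where `y := L x†`):
    -- `wdag = C0^{-1/2}(x† - x₀)` has minimal norm among preimages of solutions
    (wdag : X) (hwdag : sqrtC0 wdag = xdag - x0)
    (hmin : ∀ w : X, L (x0 + sqrtC0 w) = L xdag → ‖wdag‖ ≤ ‖w‖)
    (α : ℝ) (hα : 0 < α) :
    ∃ (wY : Y) (wX : X),
      sqrtR wY = L (dirSol sqrtC0 RinvL x0 (RinvL (xdag - x0)) α) - L xdag ∧
      sqrtC0 wX = dirSol sqrtC0 RinvL x0 (RinvL (xdag - x0)) α - xdag ∧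
      ‖wX‖ ≤ ρ ^ ((1 : ℝ) / (2 * μ + 1)) * ‖wY‖ ^ (2 * μ / (2 * μ + 1)) := by
    classical
  set B : X →L[ℝ] Y := RinvL ∘L sqrtC0 with hB
  set T : X →L[ℝ] X := ContinuousLinearMap.adjoint B ∘L B with hT
  set Tα : X →L[ℝ] X := T + α • (1 : X →L[ℝ] X) with hTα
  set G : X →L[ℝ] X := Ring.inverse Tα with hG
  have hTinner : ∀ x : X, ⟪T x, x⟫_ℝ = ‖B x‖^2 := by
    intro x
    rw [hT, ContinuousLinearMap.comp_apply, ContinuousLinearMap.adjoint_inner_left,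
      real_inner_self_eq_norm_sq]
  have hTαapp : ∀ x : X, Tα x = T x + α • x := by
    intro x
    rw [hTα]
    simp
  have hUnit : IsUnit Tα := by
    apply ContinuousLinearMap.isUnit_of_forall_le_norm_inner_map Tα
      (c := α.toNNReal) (Real.toNNReal_pos.mpr hα)
    intro x
    have h2 : ⟪Tα x, x⟫_ℝ = ‖B x‖^2 + α * ‖x‖^2 := by
      rw [hTαapp, inner_add_left, hTinner, real_inner_smul_left, real_inner_self_eq_norm_sq]
    rw [Real.norm_eq_abs, h2, Real.coe_toNNReal α hα.le]
    have h3 : α * ‖x‖^2 ≤ ‖B x‖^2 + α * ‖x‖^2 := by nlinarith [sq_nonneg ‖B x‖]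
    calc ‖x‖^2 * α = α * ‖x‖^2 := by ring
      _ ≤ ‖B x‖^2 + α * ‖x‖^2 := h3
      _ ≤ |‖B x‖^2 + α * ‖x‖^2| := le_abs_self _
  have hfpow1' : fpow 1 = T := hfpow1
  have hcomm1 : T ∘L fpow μ = fpow μ ∘L T := by
    rw [← hfpow1', ← hfpowadd 1 μ one_pos hμ, ← hfpowadd μ 1 hμ one_pos, add_comm]
  have hcomm2 : Tα * fpow μ = fpow μ * Tα := by
    show Tα ∘L fpow μ = fpow μ ∘L Tα
    rw [hTα]
    simp only [ContinuousLinearMap.add_comp, ContinuousLinearMap.comp_add,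
      ContinuousLinearMap.smul_comp, ContinuousLinearMap.comp_smul, hcomm1,
      ContinuousLinearMap.one_def, ContinuousLinearMap.comp_id,
      ContinuousLinearMap.id_comp]
  have hcommG : G * fpow μ = fpow μ * G := by
    obtain ⟨U, hU⟩ := hUnit
    have h : Commute (U : X →L[ℝ] X) (fpow μ) := by rw [hU]; exact hcomm2
    have h2 := h.units_inv_left
    rw [hG, ← hU, Ring.inverse_unit]
    exact h2
  have hGapp : ∀ x : X, G (fpow μ x) = fpow μ (G x) := by
    intro x
    have h1 := congrArg (fun A : X →L[ℝ] X => A x) hcommG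
    simpa [ContinuousLinearMap.mul_apply] using h1
  have key7 : ∀ x : X, G (T x) = x - α • G x := by
    intro x
    have h1 := congrArg (fun A : X →L[ℝ] X => A x) (Ring.inverse_mul_cancel Tα hUnit)
    simp only [ContinuousLinearMap.mul_apply, ContinuousLinearMap.one_apply] at h1
    rw [← hG] at h1
    rw [hTαapp, map_add, _root_.map_smul] at h1
    exact eq_sub_of_add_eq h1
  -- the element u and the witnesses
  set u : X := (-α) • G v with hu_def
  set wX : X := fpow μ u with hwX_def
  set wY : Y := B wX with hwY_def
  clear_value wY wX u G Tα T B
  -- ‖u‖ ≤ ρ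
  have hu_le : ‖u‖ ≤ ρ := by
    set z : X := G v with hz_def
    clear_value z
    have hz : Tα z = v := by
      have h1 := congrArg (fun A : X →L[ℝ] X => A v) (Ring.mul_inverse_cancel Tα hUnit)
      simpa [ContinuousLinearMap.mul_apply, ← hG, ← hz_def] using h1
    have hv2 : ‖v‖^2 = ‖T z‖^2 + 2*(α*⟪T z, z⟫_ℝ) + α^2*‖z‖^2 := by
      rw [← hz, hTαapp, norm_add_sq_real, real_inner_smul_right, norm_smul,
        Real.norm_eq_abs, mul_pow, sq_abs]
    have hTzz : (0:ℝ) ≤ ⟪T z, z⟫_ℝ := by rw [hTinner]; positivity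
    have hun : ‖u‖ = α * ‖z‖ := by
      rw [hu_def, norm_smul, Real.norm_eq_abs, abs_neg, abs_of_pos hα]
    have hprod : 0 ≤ α * ⟪T z, z⟫_ℝ := mul_nonneg hα.le hTzz
    have h4 : ‖u‖^2 ≤ ‖v‖^2 := by
      rw [hun, mul_pow]
      linarith [hv2, hprod, sq_nonneg ‖T z‖]
    have h5 : ‖u‖ ≤ ‖v‖ := by
      have h6 := Real.sqrt_le_sqrt h4
      rwa [Real.sqrt_sq (norm_nonneg _), Real.sqrt_sq (norm_nonneg _)] at h6
    linarith [hv, h5]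
  -- identification of the regularized solution
  have hds : dirSol sqrtC0 RinvL x0 (RinvL (xdag - x0)) α
      = x0 + sqrtC0 (G (ContinuousLinearMap.adjoint B (RinvL (xdag - x0)))) := by
    simp only [dirSol, hG, hTα, hT, hB]
  have hdag : xdag = x0 + sqrtC0 (fpow μ v) := by
    rw [← hsource]; abel
  have hzv : RinvL (xdag - x0) = B (fpow μ v) := by
    rw [hsource, hB, ContinuousLinearMap.comp_apply]
  have hadjB : ContinuousLinearMap.adjoint B (B (fpow μ v)) = T (fpow μ v) := by
    rw [hT, ContinuousLinearMap.comp_apply]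
  have hwX' : wX = -(α • G (fpow μ v)) := by
    rw [hwX_def, hu_def, _root_.map_smul, ← hGapp, neg_smul]
  have hdir : sqrtC0 wX = dirSol sqrtC0 RinvL x0 (RinvL (xdag - x0)) α - xdag := by
    rw [hds, hzv, hadjB, key7, hwX', hdag, map_neg, map_sub, _root_.map_smul]
    abel
  refine ⟨wY, wX, ?_, hdir, ?_⟩
  · -- sqrtR wY = L x_α - L x†
    have h1 : sqrtR wY = L (sqrtC0 wX) := by
      rw [hwY_def, hB, ContinuousLinearMap.comp_apply, ← hRinvL,
        ContinuousLinearMap.comp_apply]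
    rw [h1, hdir, map_sub]
  · -- the interpolation estimate
    have hsa2 : ∀ x y : X, ⟪fpow μ x, y⟫_ℝ = ⟪x, fpow μ y⟫_ℝ := by
      intro x y
      rw [← (hfpowpos μ hμ).isSelfAdjoint.adjoint_eq, ContinuousLinearMap.adjoint_inner_left,
        (hfpowpos μ hμ).isSelfAdjoint.adjoint_eq]
    have hwXn : ⟪fpow (2*μ) u, u⟫_ℝ = ‖wX‖^2 := by
      rw [show (2:ℝ)*μ = μ + μ by ring, hfpowadd μ μ hμ hμ, ContinuousLinearMap.comp_apply,
        hsa2, real_inner_self_eq_norm_sq, hwX_def]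
    have hwYn : ⟪fpow (2*μ+1) u, u⟫_ℝ = ‖wY‖^2 := by
      rw [show (2:ℝ)*μ+1 = μ + (1 + μ) by ring, hfpowadd μ (1+μ) hμ (by linarith),
        ContinuousLinearMap.comp_apply, hsa2, hfpowadd 1 μ one_pos hμ,
        ContinuousLinearMap.comp_apply, hfpow1', hT, ContinuousLinearMap.comp_apply,
        ContinuousLinearMap.adjoint_inner_left, real_inner_self_eq_norm_sq,
        hwY_def, hwX_def]
    have hmain := moment_aux fpow hfpowadd hfpowpos hfpowcont u (2*μ) (2*μ+1)
      (by linarith) (by linarith)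
    rw [show (2*μ+1) - 2*μ = (1:ℝ) by ring, Real.rpow_one, hwXn, hwYn] at hmain
    exact fin_aux ‖wX‖ ‖wY‖ ‖u‖ ρ μ (norm_nonneg _) (norm_nonneg _) (norm_nonneg _)
      hμ hu_le hmain
end

section
/- Suppose the source condition holds: x† is the (x0, C0)-minimum-norm solution of L x = y, and there exist μ ∈ (0, 1/2], ρ > 0 and v ∈ X with ‖v‖ ≤ ρ and x† − x0 = C0^{1/2} (B*B)^μ v, where B := R^{-1/2} L C0^{1/2}. Let x_α := x0 + C0^{1/2}(B*B + α Id)^{-1} B* R^{-1/2}(y − L x0). Then there exists a constant c2, independent of α, δ and ρ, such that ‖y − L x_α‖_R ≤ c2 · ρ · α^{μ + 1/2} for all α > 0. -/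
open MeasureTheory
open scoped InnerProductSpace ENNReal NNReal

/-!
Write `B = R^{-1/2} L C0^{1/2}`, `P t = (B*B)^t` and `u = P μ v`. The residual is `R^{1/2}` applied
to `B u - B (B*B + α)⁻¹ B*B u = α B (B*B + α)⁻¹ u`, and since `‖B w‖ = ‖P (1/2) w‖` and `P μ`
commutes with the resolvent, its norm is `α ‖P ν y‖` with `ν = μ + 1/2 ≤ 1` and
`y = (B*B + α)⁻¹ v`. Positivity of `B*B` gives `‖B*B y‖ ≤ ‖v‖` and `α ‖y‖ ≤ ‖v‖`, so the moment
inequality `‖P ν y‖ ≤ ‖P 1 y‖ ^ ν ‖y‖ ^ (1 - ν)` yields the bound with `c2 = 1`.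

The moment inequality is log-convexity of `t ↦ ‖P t y‖` on `[0, 1]` (with `P 0 = 1`):
the semigroup law and self-adjointness give `‖P ((s + t)/2) y‖² = ⟪P t y, P s y⟫ ≤ ‖P s y‖ ‖P t y‖`,
hence the bound at dyadic exponents by induction, and at all exponents by continuity.
-/

open ContinuousLinearMap Set Filter Topology

section Interpolation

lemma sq_rpow_midpoint {a s t : ℝ} (ha : 0 ≤ a) (hs : 0 ≤ s) (ht : 0 ≤ t) :
    (a ^ ((s + t) / 2)) ^ 2 = a ^ s * a ^ t := by
  rcases (add_nonneg hs ht).eq_or_lt with hst | hst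
  · obtain ⟨rfl, rfl⟩ : s = 0 ∧ t = 0 := by constructor <;> linarith
    simp
  rw [← Real.rpow_natCast, ← Real.rpow_mul ha, ← Real.rpow_add' ha hst.ne']
  norm_num [div_mul_cancel₀]

lemma natCast_div_two_pow_mem_Icc {n k : ℕ} (hk : k ≤ 2 ^ n) :
    (k / 2 ^ n : ℝ) ∈ Icc 0 1 :=
  ⟨by positivity, div_le_one_of_le₀ (by exact_mod_cast hk) (by positivity)⟩

variable {h : ℝ → ℝ} (hh : ∀ t, 0 ≤ h t)
  (hmid : ∀ s t, 0 ≤ s → 0 ≤ t → h ((s + t) / 2) ^ 2 ≤ h s * h t)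
include hh hmid

lemma le_rpow_mul_rpow_of_dyadic (n k : ℕ) (hk : k ≤ 2 ^ n) :
    h (k / 2 ^ n) ≤ h 1 ^ (k / 2 ^ n : ℝ) * h 0 ^ (1 - k / 2 ^ n : ℝ) := by
  induction n generalizing k with
  | zero =>
    interval_cases k <;> simp
  | succ n ih =>
    rw [pow_succ] at hk
    have hrhs_nonneg (r : ℝ) : 0 ≤ h 1 ^ r * h 0 ^ (1 - r) :=
      mul_nonneg (Real.rpow_nonneg (hh 1) _) (Real.rpow_nonneg (hh 0) _)
    have hs := ih (k / 2) (by omega)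
    have ht := ih ((k + 1) / 2) (by omega)
    obtain ⟨hs0, hs1⟩ := natCast_div_two_pow_mem_Icc (n := n) (k := k / 2) (by omega)
    obtain ⟨ht0, ht1⟩ := natCast_div_two_pow_mem_Icc (n := n) (k := (k + 1) / 2) (by omega)
    set s : ℝ := ((k / 2 : ℕ) : ℝ) / 2 ^ n
    set t : ℝ := (((k + 1) / 2 : ℕ) : ℝ) / 2 ^ n
    -- `k / 2 ^ (n + 1)` is the midpoint of `⌊k/2⌋ / 2 ^ n` and `⌈k/2⌉ / 2 ^ n`
    have hk_mid : (k / 2 ^ (n + 1) : ℝ) = (s + t) / 2 := by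
      have hsum : ((k / 2 : ℕ) : ℝ) + (((k + 1) / 2 : ℕ) : ℝ) = k := by
        exact_mod_cast (by omega : k / 2 + (k + 1) / 2 = k)
      rw [← add_div, hsum, pow_succ]
      field_simp
    have h1_mid : 1 - (s + t) / 2 = ((1 - s) + (1 - t)) / 2 := by ring
    rw [hk_mid]
    refine (abs_le_of_sq_le_sq ?_ (hrhs_nonneg _)).trans' (le_abs_self _)
    rw [mul_pow, sq_rpow_midpoint (hh 1) hs0 ht0, h1_mid,
      sq_rpow_midpoint (hh 0) (by linarith) (by linarith)]
    calc h ((s + t) / 2) ^ 2 ≤ h s * h t := hmid s t hs0 ht0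
      _ ≤ (h 1 ^ s * h 0 ^ (1 - s)) * (h 1 ^ t * h 0 ^ (1 - t)) :=
        mul_le_mul hs ht (hh t) (hrhs_nonneg s)
      _ = _ := by ring

lemma le_rpow_mul_rpow_of_sq_midpoint_le (hcont : ContinuousOn h (Ioi 0)) {ν : ℝ}
    (hν0 : 0 < ν) (hν1 : ν ≤ 1) : h ν ≤ h 1 ^ ν * h 0 ^ (1 - ν) := by
  rcases hν1.eq_or_lt with rfl | hν1
  · simp
  set w : ℕ → ℝ := fun n => (⌈ν * 2 ^ n⌉₊ : ℝ) / 2 ^ n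
  have hw : Tendsto w atTop (𝓝 ν) :=
    (tendsto_nat_ceil_mul_div_atTop hν0.le).comp (tendsto_pow_atTop_atTop_of_one_lt one_lt_two)
  have hceil_le (n : ℕ) : ⌈ν * 2 ^ n⌉₊ ≤ 2 ^ n :=
    Nat.ceil_le.mpr (by push_cast; nlinarith [pow_pos (two_pos (α := ℝ)) n])
  have hrhs : ContinuousAt (fun t : ℝ => h 1 ^ t * h 0 ^ (1 - t)) ν :=
    (Real.continuousAt_const_rpow' hν0.ne').mul <|
      (Real.continuousAt_const_rpow' (sub_ne_zero.2 hν1.ne')).comp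
        (continuousAt_const.sub continuousAt_id)
  refine le_of_tendsto_of_tendsto' ((hcont.continuousAt (Ioi_mem_nhds hν0)).tendsto.comp hw)
    (hrhs.tendsto.comp hw) fun n => ?_
  exact le_rpow_mul_rpow_of_dyadic hh hmid n _ (hceil_le n)

end Interpolation

section Update

variable {M : Type*} [Monoid M] {P : ℝ → M}

lemma update_zero_one_apply_add (hadd : ∀ s t, 0 < s → 0 < t → P (s + t) = P s * P t)
    {s t : ℝ} (hs : 0 ≤ s) (ht : 0 ≤ t) :
    Function.update P 0 1 (s + t) = Function.update P 0 1 s * Function.update P 0 1 t := by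
  rcases hs.eq_or_lt with rfl | hs
  · simp
  rcases ht.eq_or_lt with rfl | ht
  · simp [hs.ne']
  simp [Function.update_of_ne, hs.ne', ht.ne', (add_pos hs ht).ne', hadd s t hs ht]

lemma isSelfAdjoint_update_zero_one [StarMul M] (hsa : ∀ t, 0 < t → IsSelfAdjoint (P t)) {t : ℝ}
    (ht : 0 ≤ t) : IsSelfAdjoint (Function.update P 0 1 t) := by
  rcases ht.eq_or_lt with rfl | ht
  · simp
  · simpa [ht.ne'] using hsa t ht

end Update

section Semigroup

variable {X : Type*} [NormedAddCommGroup X] [InnerProductSpace ℝ X] [CompleteSpace X]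
  {P : ℝ → X →L[ℝ] X}

lemma sq_norm_apply_midpoint_le
    (hadd : ∀ s t, 0 ≤ s → 0 ≤ t → P (s + t) = P s ∘L P t)
    (hsa : ∀ t, 0 ≤ t → IsSelfAdjoint (P t)) {s t : ℝ} (hs : 0 ≤ s) (ht : 0 ≤ t) (x : X) :
    ‖P ((s + t) / 2) x‖ ^ 2 ≤ ‖P s x‖ * ‖P t x‖ := by
  have hm : 0 ≤ (s + t) / 2 := by positivity
  rw [apply_norm_sq_eq_inner_adjoint_left, (hsa _ hm).adjoint_eq, ← hadd _ _ hm hm, add_halves,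
    hadd s t hs ht, comp_apply, RCLike.re_to_real]
  exact ((hsa s hs).isSymmetric _ _).trans_le ((real_inner_le_norm _ _).trans_eq (mul_comm _ _))

lemma norm_apply_le_rpow_mul_rpow (hadd : ∀ s t, 0 < s → 0 < t → P (s + t) = P s ∘L P t)
    (hsa : ∀ t, 0 < t → IsSelfAdjoint (P t)) (hcont : ContinuousOn P (Ioi 0)) (x : X)
    {ν : ℝ} (hν0 : 0 < ν) (hν1 : ν ≤ 1) :
    ‖P ν x‖ ≤ ‖P 1 x‖ ^ ν * ‖x‖ ^ (1 - ν) := by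
  set Q := Function.update P 0 1
  have hQ : EqOn Q P (Ioi 0) := fun t ht => Function.update_of_ne (ne_of_gt ht) _ _
  have hQcont : ContinuousOn (fun t => ‖Q t x‖) (Ioi 0) :=
    continuous_norm.comp_continuousOn <|
      (apply ℝ X x).continuous.comp_continuousOn (hcont.congr hQ)
  have key := le_rpow_mul_rpow_of_sq_midpoint_le (fun _ => norm_nonneg _)
    (fun s t hs ht => sq_norm_apply_midpoint_le (fun s t => update_zero_one_apply_add hadd)
      (fun t => isSelfAdjoint_update_zero_one hsa) hs ht x) hQcont hν0 hν1
  simpa [Q, hν0.ne'] using key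

end Semigroup

lemma Commute.ring_inverse_right {M₀ : Type*} [MonoidWithZero M₀] {a b : M₀}
    (h : Commute a b) : Commute a (Ring.inverse b) := by
  by_cases hb : IsUnit b
  · obtain ⟨u, rfl⟩ := hb
    rw [Ring.inverse_unit]
    exact h.units_inv_right
  · rw [Ring.inverse_non_unit b hb]
    exact Commute.zero_right a

lemma Real.mul_rpow_mul_div_rpow_one_sub {a α : ℝ} (ha : 0 ≤ a) (hα : 0 < α) (ν : ℝ) :
    α * (a ^ ν * (a / α) ^ (1 - ν)) = α ^ ν * a := by
  have hα_pow : α / α ^ (1 - ν) = α ^ ν := by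
    conv_rhs => rw [show ν = 1 - (1 - ν) by ring, Real.rpow_sub hα, Real.rpow_one]
  have ha_pow : a ^ ν * a ^ (1 - ν) = a := by
    rw [← Real.rpow_add' ha (by norm_num), add_sub_cancel, Real.rpow_one]
  calc α * (a ^ ν * (a / α) ^ (1 - ν)) = α / α ^ (1 - ν) * (a ^ ν * a ^ (1 - ν)) := by
        rw [Real.div_rpow ha hα.le]; ring
    _ = α ^ ν * a := by rw [hα_pow, ha_pow]

section Tikhonov

variable {X : Type*} [NormedAddCommGroup X] [InnerProductSpace ℝ X] {S : X →L[ℝ] X} {α : ℝ}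

lemma ContinuousLinearMap.IsPositive.isUnit_add_smul_one [CompleteSpace X] (hS : S.IsPositive)
    (hα : 0 < α) : IsUnit (S + α • 1) := by
  refine isUnit_of_forall_le_norm_inner_map _ (c := ⟨α, hα.le⟩) hα fun x => ?_
  have hSx : 0 ≤ ⟪S x, x⟫_ℝ := by simpa using hS.re_inner_nonneg_left x
  change ‖x‖ ^ 2 * α ≤ _
  rw [Real.norm_eq_abs, add_apply, smul_apply, one_apply_eq_self, inner_add_left,
    real_inner_smul_left, real_inner_self_eq_norm_sq]
  exact (le_add_of_nonneg_left hSx).trans_eq' (mul_comm _ _) |>.trans (le_abs_self _)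

lemma norm_add_smul_one_apply_sq (S : X →L[ℝ] X) (α : ℝ) (y : X) :
    ‖(S + α • 1) y‖ ^ 2 = ‖S y‖ ^ 2 + 2 * α * ⟪S y, y⟫_ℝ + α ^ 2 * ‖y‖ ^ 2 := by
  rw [add_apply, smul_apply, one_apply_eq_self, norm_add_sq_real, real_inner_smul_right,
    norm_smul, mul_pow, Real.norm_eq_abs, sq_abs]
  ring

lemma ContinuousLinearMap.IsPositive.norm_apply_le_norm_add_smul_one_apply (hS : S.IsPositive)
    (hα : 0 ≤ α) (y : X) : ‖S y‖ ≤ ‖(S + α • 1) y‖ := by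
  have hSy : 0 ≤ ⟪S y, y⟫_ℝ := by simpa using hS.re_inner_nonneg_left y
  refine (pow_le_pow_iff_left₀ (norm_nonneg _) (norm_nonneg _) two_ne_zero).1 ?_
  rw [norm_add_smul_one_apply_sq]
  nlinarith [mul_nonneg hα hSy]

lemma ContinuousLinearMap.IsPositive.mul_norm_le_norm_add_smul_one_apply (hS : S.IsPositive)
    (hα : 0 ≤ α) (y : X) : α * ‖y‖ ≤ ‖(S + α • 1) y‖ := by
  have hSy : 0 ≤ ⟪S y, y⟫_ℝ := by simpa using hS.re_inner_nonneg_left y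
  refine (pow_le_pow_iff_left₀ (by positivity) (norm_nonneg _) two_ne_zero).1 ?_
  rw [norm_add_smul_one_apply_sq]
  nlinarith [mul_nonneg hα hSy]

lemma sub_ring_inverse_add_smul_one_apply (hT : IsUnit (S + α • 1)) (u : X) :
    u - Ring.inverse (S + α • 1) (S u) = α • Ring.inverse (S + α • 1) u := by
  have hu : Ring.inverse (S + α • 1) ((S + α • 1) u) = u := by
    rw [← mul_apply_eq_comp, Ring.inverse_mul_cancel _ hT, one_apply_eq_self]
  rw [add_apply, smul_apply, one_apply_eq_self, map_add, map_smul] at hu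
  nth_rw 1 [← hu]
  abel

end Tikhonov

lemma norm_apply_eq_of_comp_self_eq_adjoint_comp_self {X Y : Type*} [NormedAddCommGroup X]
    [InnerProductSpace ℝ X] [CompleteSpace X] [NormedAddCommGroup Y] [InnerProductSpace ℝ Y]
    [CompleteSpace Y] {A : X →L[ℝ] X} {B : X →L[ℝ] Y} (hA : IsSelfAdjoint A)
    (h : A ∘L A = adjoint B ∘L B) (x : X) : ‖B x‖ = ‖A x‖ := by
  rw [← sq_eq_sq₀ (norm_nonneg _) (norm_nonneg _), apply_norm_sq_eq_inner_adjoint_left,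
    apply_norm_sq_eq_inner_adjoint_left, hA.adjoint_eq, h]

lemma norm_sub_tikhonov_le {X Y : Type*} [NormedAddCommGroup X] [InnerProductSpace ℝ X]
    [CompleteSpace X] [NormedAddCommGroup Y] [InnerProductSpace ℝ Y] [CompleteSpace Y]
    (B : X →L[ℝ] Y) {P : ℝ → X →L[ℝ] X} (hP1 : P 1 = adjoint B ∘L B)
    (hadd : ∀ s t, 0 < s → 0 < t → P (s + t) = P s ∘L P t)
    (hsa : ∀ t, 0 < t → IsSelfAdjoint (P t)) (hcont : ContinuousOn P (Ioi 0))
    {μ : ℝ} (hμ0 : 0 < μ) (hμ1 : μ ≤ 1 / 2) (v : X) {α : ℝ} (hα : 0 < α) :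
    ‖B (P μ v) - B (Ring.inverse (adjoint B ∘L B + α • 1) (adjoint B (B (P μ v))))‖ ≤
      α ^ (μ + 1 / 2) * ‖v‖ := by
  have hS : (adjoint B ∘L B).IsPositive := isPositive_adjoint_comp_self B
  set T := adjoint B ∘L B + α • 1
  have hT : IsUnit T := hS.isUnit_add_smul_one hα
  set y := Ring.inverse T v
  have hTy : T y = v := by rw [← mul_apply_eq_comp, Ring.mul_inverse_cancel _ hT, one_apply_eq_self]
  have hcomm : Commute (P μ) (Ring.inverse T) := by
    refine Commute.ring_inverse_right (Commute.add_right ?_ ((Commute.one_right _).smul_right α))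
    rw [← hP1]
    change P μ ∘L P 1 = P 1 ∘L P μ
    rw [← hadd _ _ hμ0 one_pos, ← hadd _ _ one_pos hμ0, add_comm]
  have hhalf : P (1 / 2) ∘L P (1 / 2) = adjoint B ∘L B := by
    rw [← hadd _ _ one_half_pos one_half_pos, add_halves, hP1]
  calc ‖B (P μ v) - B (Ring.inverse T (adjoint B (B (P μ v))))‖
      = α * ‖B (Ring.inverse T (P μ v))‖ := by
        rw [← comp_apply (adjoint B) B, ← map_sub, sub_ring_inverse_add_smul_one_apply hT,
          map_smul, norm_smul, Real.norm_of_nonneg hα.le]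
    _ = α * ‖P (μ + 1 / 2) y‖ := by
        rw [← mul_apply_eq_comp, ← hcomm.eq, mul_apply_eq_comp,
          norm_apply_eq_of_comp_self_eq_adjoint_comp_self (hsa _ one_half_pos) hhalf,
          add_comm, hadd _ _ one_half_pos hμ0, comp_apply]
    _ ≤ α * (‖P 1 y‖ ^ (μ + 1 / 2) * ‖y‖ ^ (1 - (μ + 1 / 2))) := by
        gcongr
        exact norm_apply_le_rpow_mul_rpow hadd hsa hcont y (by positivity) (by linarith)
    _ ≤ α * (‖v‖ ^ (μ + 1 / 2) * (‖v‖ / α) ^ (1 - (μ + 1 / 2))) := by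
        have hPy : ‖P 1 y‖ ≤ ‖v‖ := by
          rw [hP1, ← hTy]; exact hS.norm_apply_le_norm_add_smul_one_apply hα.le y
        have hy : ‖y‖ ≤ ‖v‖ / α := by
          rw [le_div_iff₀' hα, ← hTy]; exact hS.mul_norm_le_norm_add_smul_one_apply hα.le y
        gcongr
        linarith
    _ = α ^ (μ + 1 / 2) * ‖v‖ := Real.mul_rpow_mul_div_rpow_one_sub (norm_nonneg v) hα _

lemma apply_sub_apply_dirSol {E X Y : Type*} [NormedAddCommGroup E] [InnerProductSpace ℝ E]
    [CompleteSpace E] [NormedAddCommGroup X] [InnerProductSpace ℝ X] [CompleteSpace X]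
    [NormedAddCommGroup Y] [InnerProductSpace ℝ Y] [CompleteSpace Y] (A : E →L[ℝ] X)
    {L RinvL : X →L[ℝ] Y} {sqrtR : Y →L[ℝ] Y} (hRinvL : sqrtR ∘L RinvL = L) (x0 x : X) (α : ℝ) :
    L x - L (dirSol A RinvL x0 (RinvL (x - x0)) α) =
      sqrtR (RinvL (x - x0) - (RinvL ∘L A)
        (Ring.inverse (adjoint (RinvL ∘L A) ∘L (RinvL ∘L A) + α • 1)
          (adjoint (RinvL ∘L A) (RinvL (x - x0))))) := by
  subst hRinvL
  simp only [dirSol, comp_apply, map_sub, map_add]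
  abel

theorem stmt11_general
    {X Y : Type*}
    [NormedAddCommGroup X] [InnerProductSpace ℝ X] [CompleteSpace X]
    [NormedAddCommGroup Y] [InnerProductSpace ℝ Y] [CompleteSpace Y]
    (L : X →L[ℝ] Y)
    -- `sqrtC0 = C0^{1/2}` and `sqrtR = R^{1/2}`
    (sqrtC0 : X →L[ℝ] X)
    (sqrtR : Y →L[ℝ] Y)
    -- `RinvL = R^{-1/2} L` is bounded with `‖R^{-1/2} L‖ ≤ c_RL`
    (RinvL : X →L[ℝ] Y) (hRinvL : sqrtR ∘L RinvL = L)
    (x0 : X)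
    (μ : ℝ) (hμ : 0 < μ) (hμhalf : μ ≤ 1 / 2)
    -- `fpow t = (B*B)^t` for `t > 0`, where `B = R^{-1/2} L C0^{1/2} = RinvL ∘L sqrtC0`
    (fpow : ℝ → (X →L[ℝ] X))
    (hfpow1 : fpow 1 = (ContinuousLinearMap.adjoint (RinvL ∘L sqrtC0)) ∘L (RinvL ∘L sqrtC0))
    (hfpowadd : ∀ s t : ℝ, 0 < s → 0 < t → fpow (s + t) = fpow s ∘L fpow t)
    (hfpowpos : ∀ t : ℝ, 0 < t → (fpow t).IsPositive)
    (hfpowcont : ContinuousOn fpow (Set.Ioi (0 : ℝ))) :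
    ∃ c2 : ℝ, 0 < c2 ∧
      ∀ (xdag : X) (ρ : ℝ) (v : X), 0 < ρ → ‖v‖ ≤ ρ →
        -- source condition
        xdag - x0 = sqrtC0 (fpow μ v) →
        -- `x†` is the `(x₀, C0)`-minimum-norm solution of `L x = L x†`
        (∃ wdag : X, sqrtC0 wdag = xdag - x0 ∧
          ∀ w : X, L (x0 + sqrtC0 w) = L xdag → ‖wdag‖ ≤ ‖w‖) →
        ∀ α : ℝ, 0 < α →
          ∃ wY : Y,
            sqrtR wY = L xdag - L (dirSol sqrtC0 RinvL x0 (RinvL (xdag - x0)) α) ∧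
            ‖wY‖ ≤ c2 * ρ * α ^ (μ + 1 / 2) := by
  refine ⟨1, one_pos, fun xdag ρ v _ hvρ hsrc _ α hα => ?_⟩
  refine ⟨_, (apply_sub_apply_dirSol sqrtC0 hRinvL x0 xdag α).symm, ?_⟩
  have hz : RinvL (xdag - x0) = (RinvL ∘L sqrtC0) (fpow μ v) := by rw [hsrc, comp_apply]
  rw [hz, one_mul, mul_comm]
  calc _ ≤ α ^ (μ + 1 / 2) * ‖v‖ :=
        norm_sub_tikhonov_le _ hfpow1 hfpowadd (fun t ht => (hfpowpos t ht).isSelfAdjoint)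
          hfpowcont hμ hμhalf v hα
    _ ≤ α ^ (μ + 1 / 2) * ρ := by gcongr

/-- STATEMENT 11: under the source condition, the exact-data residual satisfies
`‖y - L x_α‖_R ≤ c₂ ρ α^{μ+1/2}` with `c₂` independent of `α`, `δ` and `ρ`
(the source-condition data `x†, ρ, v` and the minimum-norm property are quantified after `c₂`).
Here `x_α = dirSol sqrtC0 RinvL x0 (RinvL (xdag - x0)) α` and `y = L x†`. -/
theorem stmt11
    {X Y : Type*}
    [NormedAddCommGroup X] [InnerProductSpace ℝ X] [CompleteSpace X]
    [TopologicalSpace.SeparableSpace X]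
    [NormedAddCommGroup Y] [InnerProductSpace ℝ Y] [CompleteSpace Y]
    [TopologicalSpace.SeparableSpace Y]
    (L : X →L[ℝ] Y)
    (C0 : X →L[ℝ] X) (hC0pos : C0.IsPositive) (hC0inj : Function.Injective C0)
    (hC0cpt : IsCompactOperator (⇑C0))
    (R : Y →L[ℝ] Y) (hRpos : R.IsPositive) (hRinj : Function.Injective R)
    -- `sqrtC0 = C0^{1/2}` and `sqrtR = R^{1/2}`
    (sqrtC0 : X →L[ℝ] X) (hsqrtC0pos : sqrtC0.IsPositive) (hsqrtC0 : sqrtC0 ∘L sqrtC0 = C0)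
    (sqrtR : Y →L[ℝ] Y) (hsqrtRpos : sqrtR.IsPositive) (hsqrtR : sqrtR ∘L sqrtR = R)
    -- `RinvL = R^{-1/2} L` is bounded with `‖R^{-1/2} L‖ ≤ c_RL`
    (RinvL : X →L[ℝ] Y) (hRinvL : sqrtR ∘L RinvL = L)
    (cRL : ℝ) (hcRL : ‖RinvL‖ ≤ cRL)
    (x0 : X)
    (μ : ℝ) (hμ : 0 < μ) (hμhalf : μ ≤ 1 / 2)
    -- `fpow t = (B*B)^t` for `t > 0`, where `B = R^{-1/2} L C0^{1/2} = RinvL ∘L sqrtC0`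
    (fpow : ℝ → (X →L[ℝ] X))
    (hfpow1 : fpow 1 = (ContinuousLinearMap.adjoint (RinvL ∘L sqrtC0)) ∘L (RinvL ∘L sqrtC0))
    (hfpowadd : ∀ s t : ℝ, 0 < s → 0 < t → fpow (s + t) = fpow s ∘L fpow t)
    (hfpowpos : ∀ t : ℝ, 0 < t → (fpow t).IsPositive)
    (hfpowcont : ContinuousOn fpow (Set.Ioi (0 : ℝ))) :
    ∃ c2 : ℝ, 0 < c2 ∧
      ∀ (xdag : X) (ρ : ℝ) (v : X), 0 < ρ → ‖v‖ ≤ ρ →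
        -- source condition
        xdag - x0 = sqrtC0 (fpow μ v) →
        -- `x†` is the `(x₀, C0)`-minimum-norm solution of `L x = L x†`
        (∃ wdag : X, sqrtC0 wdag = xdag - x0 ∧
          ∀ w : X, L (x0 + sqrtC0 w) = L xdag → ‖wdag‖ ≤ ‖w‖) →
        ∀ α : ℝ, 0 < α →
          ∃ wY : Y,
            sqrtR wY = L xdag - L (dirSol sqrtC0 RinvL x0 (RinvL (xdag - x0)) α) ∧
            ‖wY‖ ≤ c2 * ρ * α ^ (μ + 1 / 2) :=
  stmt11_general L sqrtC0 sqrtR RinvL hRinvL x0 μ hμ hμhalf fpow hfpow1 hfpowadd hfpowpos hfpowcont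
end
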